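/- arXiv:1311.6387 — 7 statements merged into one kernel-verified Lean document; each statement's English description precedes it below -/
import Mathlib

section
/- Let $m \geq 1$. Then $|T_{3^m}(A,B)| \leq 3^{1 + 3m/4} \gcd(3^m, A, B)^{1/4}$, where $T_{3^m}(A,B) = \sum_{n \bmod 3^m, 3 \nmid n} e((An^2 + B\bar n)/3^m)$. -/
/-!
Postnikov's method. Let `gcd (3 ^ m, A, B) = 3 ^ k`; if `m ≤ k + 1` the trivial bound `|T| ≤ 3 ^ m`
suffices. Otherwise write `3 ^ m = L * J` with `L = 3 ^ l`, `J = 3 ^ (k + j)`, `l = ⌈(m - k) / 2⌉`,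
`j = ⌊(m - k) / 2⌋`, so that `3 ^ m` divides `L ^ 2 * A` and `L ^ 2 * B`. Then the phase
`f n = A n ^ 2 + B n⁻¹` is linear along `n = u + L v`: `f (u + L v) ≡ f u + L v f' u (mod 3 ^ m)`
with `f' u = 2 A u - B u⁻²`. Summing over `v` gives `J` or `0` according as `J ∣ f' u`, that is,
`J ∣ 2 A u ^ 3 - B`. Dividing out `3 ^ k`, this either has no solution or fixes `u ^ 3` modulo
`3 ^ j`, hence `u` modulo `3 ^ (j - 1)`. So `|T| ≤ J * 3 ^ (l - j + 1) = 3 ^ (m + 1 - j)`.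
-/

noncomputable def e (x : ℝ) : ℂ := Complex.exp (2 * Real.pi * Complex.I * x)

noncomputable def T (q : ℕ) (A B : ℤ) : ℂ :=
  ∑ n ∈ (Finset.range q).filter (fun n => Nat.Coprime n q),
    e (((A * (n : ℤ) ^ 2 + B * (((n : ZMod q))⁻¹.val : ℤ) : ℤ) : ℝ) / (q : ℝ))

open Finset Complex

lemma e_add (x y : ℝ) : e (x + y) = e x * e y := by
  simp only [e, ofReal_add, mul_add, Complex.exp_add]

lemma norm_e (x : ℝ) : ‖e x‖ = 1 := by
  rw [e, show 2 * (Real.pi : ℂ) * I * x = (2 * Real.pi * x : ℝ) * I by push_cast; ring]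
  exact norm_exp_ofReal_mul_I _

lemma e_intCast_div (q : ℕ) [NeZero q] (X : ℤ) : e (X / q) = ZMod.stdAddChar (X : ZMod q) := by
  rw [ZMod.stdAddChar_coe, e]
  push_cast
  ring_nf

lemma e_intCast_div_eq_of_modEq {q : ℕ} [NeZero q] {X Y : ℤ} (h : X ≡ Y [ZMOD q]) :
    e (X / q) = e (Y / q) := by
  rw [e_intCast_div, e_intCast_div, (ZMod.intCast_eq_intCast_iff _ _ _).2 h]

lemma sum_range_e_mul_div (J : ℕ) [NeZero J] (g : ℤ) :
    ∑ v ∈ range J, e (v * g / J) = if (J : ℤ) ∣ g then (J : ℂ) else 0 := by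
  set ζ := ZMod.stdAddChar (g : ZMod J)
  have hpow : ∀ v : ℕ, e (v * g / J) = ζ ^ v := fun v => by
    rw [← AddChar.map_nsmul_eq_pow, nsmul_eq_mul]
    exact_mod_cast e_intCast_div J (v * g)
  have hζ : ζ ^ J = 1 := by
    rw [← AddChar.map_nsmul_eq_pow, nsmul_eq_mul, ZMod.natCast_self, zero_mul,
      AddChar.map_zero_eq_one]
  simp_rw [hpow]
  by_cases hg : (g : ZMod J) = 0
  · simp [ζ, hg, (ZMod.intCast_zmod_eq_zero_iff_dvd g J).1 hg]
  · rw [if_neg (mt (ZMod.intCast_zmod_eq_zero_iff_dvd g J).2 hg)]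
    have : ζ ≠ 1 := fun h =>
      hg (ZMod.injective_stdAddChar (h.trans (AddChar.map_zero_eq_one _).symm))
    rw [geom_sum_eq this, hζ, sub_self, zero_div]

-- `T q A B` is `∑ e (phase q A B n / q)` by definition; `phaseDeriv` is the derivative of `phase`.
def phase (q : ℕ) (A B : ℤ) (n : ℕ) : ℤ := A * n ^ 2 + B * ((n : ZMod q)⁻¹.val : ℤ)

def phaseDeriv (q : ℕ) (A B : ℤ) (u : ℕ) : ℤ := 2 * A * u - B * ((u : ZMod q)⁻¹.val : ℤ) ^ 2

lemma phase_add_mul_modEq {q L : ℕ} [NeZero q] {A B : ℤ} (hA : (q : ℤ) ∣ L ^ 2 * A)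
    (hB : (q : ℤ) ∣ L ^ 2 * B) {u v : ℕ} (hu : u.Coprime q) (huv : (u + L * v).Coprime q) :
    phase q A B (u + L * v) ≡ phase q A B u + L * v * phaseDeriv q A B u [ZMOD q] := by
  rw [← ZMod.intCast_eq_intCast_iff]
  have hA' : (L : ZMod q) ^ 2 * A = 0 := by
    exact_mod_cast (ZMod.intCast_zmod_eq_zero_iff_dvd _ q).2 hA
  have hB' : (L : ZMod q) ^ 2 * B = 0 := by
    exact_mod_cast (ZMod.intCast_zmod_eq_zero_iff_dvd _ q).2 hB
  have hinv : (u : ZMod q) * (u : ZMod q)⁻¹ = 1 := ZMod.coe_mul_inv_eq_one u hu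
  have hinv' : ((u + L * v : ℕ) : ZMod q) * ((u + L * v : ℕ) : ZMod q)⁻¹ = 1 :=
    ZMod.coe_mul_inv_eq_one _ huv
  simp only [phase, phaseDeriv]
  push_cast [ZMod.natCast_val, ZMod.cast_id] at hinv' ⊢
  set x : ZMod q := (u : ZMod q)⁻¹
  set w : ZMod q := ((u : ZMod q) + L * v)⁻¹
  linear_combination (v : ZMod q) ^ 2 * hA' + (B * x - B * L * v * x ^ 2) * hinv'
    + (B * L * v * x * w - B * w) * hinv + w * x ^ 2 * (v : ZMod q) ^ 2 * hB'

lemma sum_range_e_phase_add_mul {q L J : ℕ} [NeZero q] (hq : q = L * J) {A B : ℤ}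
    (hA : (q : ℤ) ∣ L ^ 2 * A) (hB : (q : ℤ) ∣ L ^ 2 * B) {u : ℕ} (hu : u.Coprime q)
    (huv : ∀ v, (u + L * v).Coprime q) :
    ∑ v ∈ range J, e (phase q A B (u + L * v) / q)
      = e (phase q A B u / q) * if (J : ℤ) ∣ phaseDeriv q A B u then (J : ℂ) else 0 := by
  have hL : L ≠ 0 := left_ne_zero_of_mul (hq ▸ NeZero.ne q)
  have : NeZero J := ⟨right_ne_zero_of_mul (hq ▸ NeZero.ne q)⟩
  have hshift : ∀ v : ℕ, e (phase q A B (u + L * v) / q)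
      = e (phase q A B u / q) * e (v * phaseDeriv q A B u / J) := fun v => by
    rw [e_intCast_div_eq_of_modEq (phase_add_mul_modEq hA hB hu (huv v)), ← e_add, hq]
    congr 1
    push_cast
    field_simp
  simp_rw [hshift, ← mul_sum, sum_range_e_mul_div]

lemma intCast_dvd_phaseDeriv_iff {q J : ℕ} [NeZero q] (hJ : J ∣ q) {A B : ℤ} {u : ℕ}
    (hu : u.Coprime q) :
    (J : ℤ) ∣ phaseDeriv q A B u ↔ (J : ℤ) ∣ 2 * A * u ^ 3 - B := by
  have hinv : (u : ZMod J) * ((u : ZMod q)⁻¹.val : ZMod J) = 1 := by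
    rw [ZMod.natCast_val, ← ZMod.castHom_apply (h := hJ),
      ← map_natCast (ZMod.castHom hJ (ZMod J)) u, ← map_mul, ZMod.coe_mul_inv_eq_one u hu, map_one]
  simp only [← ZMod.intCast_zmod_eq_zero_iff_dvd, phaseDeriv]
  push_cast
  set x : ZMod J := ((u : ZMod q)⁻¹.val : ZMod J)
  constructor <;> intro h
  · linear_combination (u : ZMod J) ^ 2 * h + B * ((u : ZMod J) * x + 1) * hinv
  · linear_combination x ^ 2 * h - 2 * A * u * ((u : ZMod J) * x + 1) * hinv

lemma sum_range_mul {M : Type*} [AddCommMonoid M] (L J : ℕ) (f : ℕ → M) :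
    ∑ n ∈ range (L * J), f n = ∑ u ∈ range L, ∑ v ∈ range J, f (u + L * v) := by
  induction J with
  | zero => simp
  | succ J ih =>
    rw [Nat.mul_succ, sum_range_add, ih]
    simp_rw [sum_range_succ, sum_add_distrib, add_comm]

lemma sum_filter_range_mul {M : Type*} [AddCommMonoid M] {L : ℕ} (J : ℕ) {P : ℕ → Prop}
    [DecidablePred P] (hP : ∀ u v, P (u + L * v) ↔ P u) (f : ℕ → M) :
    ∑ n ∈ range (L * J) with P n, f n = ∑ u ∈ range L with P u, ∑ v ∈ range J, f (u + L * v) := by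
  simp_rw [sum_filter, sum_range_mul, hP, sum_ite_irrel, sum_const_zero]

lemma norm_T_le (q : ℕ) (A B : ℤ) : ‖T q A B‖ ≤ q := by
  calc ‖T q A B‖ ≤ ∑ n ∈ range q with n.Coprime q, ‖e (phase q A B n / q)‖ := norm_sum_le _ _
    _ ≤ q := by simpa [norm_e] using card_filter_le (range q) _

lemma norm_T_prime_pow_le {p l j : ℕ} (hp : p.Prime) (hl : l ≠ 0) {A B : ℤ}
    (hA : (p : ℤ) ^ (l + j) ∣ ((p : ℤ) ^ l) ^ 2 * A)
    (hB : (p : ℤ) ^ (l + j) ∣ ((p : ℤ) ^ l) ^ 2 * B) :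
    ‖T (p ^ (l + j)) A B‖
      ≤ p ^ j * #{u ∈ range (p ^ l) | ¬ p ∣ u ∧ (p : ℤ) ^ j ∣ 2 * A * u ^ 3 - B} := by
  have : NeZero (p ^ (l + j)) := ⟨pow_ne_zero _ hp.ne_zero⟩
  have hcop : ∀ n, n.Coprime (p ^ (l + j)) ↔ ¬ p ∣ n := fun n => by
    rw [Nat.coprime_pow_right_iff (by omega), Nat.coprime_comm, hp.coprime_iff_not_dvd]
  have hshift : ∀ u v, ¬ p ∣ u + p ^ l * v ↔ ¬ p ∣ u := fun u v => by
    rw [Nat.dvd_add_left ((dvd_pow_self p hl).mul_right v)]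
  have hsplit : T (p ^ (l + j)) A B = ∑ u ∈ range (p ^ l) with ¬ p ∣ u,
      e (phase (p ^ (l + j)) A B u / (p ^ (l + j) : ℕ))
        * if ((p ^ j : ℕ) : ℤ) ∣ phaseDeriv (p ^ (l + j)) A B u then ((p ^ j : ℕ) : ℂ) else 0 := by
    rw [T, filter_congr fun n _ => hcop n, pow_add, sum_filter_range_mul _ hshift, ← pow_add]
    refine sum_congr rfl fun u hu => sum_range_e_phase_add_mul (pow_add p l j) ?_ ?_ ?_ ?_
    · exact_mod_cast hA
    · exact_mod_cast hB
    · exact (hcop u).2 (mem_filter.1 hu).2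
    · exact fun v => (hcop _).2 ((hshift u v).2 (mem_filter.1 hu).2)
  rw [hsplit]
  calc _ ≤ ∑ u ∈ range (p ^ l) with ¬ p ∣ u,
        if (p : ℤ) ^ j ∣ 2 * A * u ^ 3 - B then (p : ℝ) ^ j else 0 := by
        refine (norm_sum_le _ _).trans (sum_le_sum fun u hu => ?_)
        have hdvd := intCast_dvd_phaseDeriv_iff (A := A) (B := B)
          (pow_dvd_pow p (Nat.le_add_left j l)) ((hcop u).2 (mem_filter.1 hu).2)
        push_cast at hdvd
        simp only [norm_mul, norm_e, one_mul, Nat.cast_pow, hdvd]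
        split_ifs <;> simp
    _ = _ := by rw [← sum_filter, filter_filter, sum_const, nsmul_eq_mul, mul_comm]

lemma Prime.pow_pred_dvd_of_dvd_mul {M : Type*} [CommMonoidWithZero M] [IsCancelMulZero M]
    {p a b : M} (hp : Prime p) (hb : ¬ p ^ 2 ∣ b) {n : ℕ} (h : p ^ n ∣ a * b) :
    p ^ (n - 1) ∣ a := by
  by_cases hpb : p ∣ b
  · obtain ⟨c, rfl⟩ := hpb
    have hc : ¬ p ∣ c := fun hc => hb (by rw [sq]; exact mul_dvd_mul_left p hc)
    rcases n with _ | n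
    · simp
    rw [pow_succ', mul_left_comm] at h
    exact hp.pow_dvd_of_dvd_mul_right n hc ((mul_dvd_mul_iff_left hp.ne_zero).1 h)
  · exact (pow_dvd_pow p (n.sub_le 1)).trans (hp.pow_dvd_of_dvd_mul_right n hpb h)

-- `a ^ 3 - b ^ 3 = (a - b) * ((a - b) ^ 2 + 3 * a * b)`, and `9` never divides the second factor.
lemma Int.three_pow_pred_dvd_sub_of_dvd_cube_sub {a b : ℤ} (hab : ¬ 3 ∣ a * b) {n : ℕ}
    (h : 3 ^ n ∣ a ^ 3 - b ^ 3) : 3 ^ (n - 1) ∣ a - b := by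
  refine Int.prime_three.pow_pred_dvd_of_dvd_mul (b := (a - b) ^ 2 + 3 * (a * b)) (fun h9 => ?_)
    (by rwa [show (a - b) * ((a - b) ^ 2 + 3 * (a * b)) = a ^ 3 - b ^ 3 by ring])
  have h3 : (3 : ℤ) ∣ a - b := Int.prime_three.dvd_of_dvd_pow (n := 2)
    ((dvd_add_left (dvd_mul_right 3 _)).1 ((dvd_pow_self 3 two_ne_zero).trans h9))
  have h9ab : (3 : ℤ) * 3 ∣ 3 * (a * b) := by
    rw [← sq]; exact (dvd_add_right (pow_dvd_pow_of_dvd h3 2)).1 h9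
  exact hab ((mul_dvd_mul_iff_left three_ne_zero).1 h9ab)

lemma card_le_of_modEq {D t : ℕ} (hD : 0 < D) {S : Finset ℕ} (hS : S ⊆ range (D * t))
    (h : ∀ a ∈ S, ∀ b ∈ S, a ≡ b [MOD D]) : #S ≤ t := by
  obtain rfl | ⟨a, ha⟩ := S.eq_empty_or_nonempty
  · simp
  calc #S ≤ #{n ∈ range (D * t) | n ≡ a [MOD D]} :=
        card_le_card fun b hb => mem_filter.2 ⟨hS hb, h b hb a ha⟩
    _ = t := by
      rw [← Nat.count_eq_card_filter_range, Nat.count_modEq_card _ hD]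
      simp [Nat.mul_div_cancel_left _ hD]

lemma card_filter_cube_dvd_le {l j : ℕ} (hj : 1 ≤ j) (hjl : j ≤ l) (k : ℕ) {A B : ℤ}
    (hAB : ¬ (3 ∣ A ∧ 3 ∣ B)) :
    #{u ∈ range (3 ^ l) |
        ¬ (3 : ℕ) ∣ u ∧ (3 : ℤ) ^ (k + j) ∣ 2 * (3 ^ k * A) * (u : ℤ) ^ 3 - 3 ^ k * B}
      ≤ 3 ^ (l - j + 1) := by
  have hk : ∀ u : ℕ, (3 : ℤ) ^ (k + j) ∣ 2 * (3 ^ k * A) * u ^ 3 - 3 ^ k * B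
      ↔ (3 : ℤ) ^ j ∣ 2 * A * u ^ 3 - B := fun u => by
    rw [pow_add, show 2 * (3 ^ k * A) * (u : ℤ) ^ 3 - 3 ^ k * B = 3 ^ k * (2 * A * u ^ 3 - B) by
      ring]
    exact mul_dvd_mul_iff_left (by positivity)
  simp_rw [hk]
  by_cases hA : (3 : ℤ) ∣ A
  · have hnone : ∀ u : ℕ, ¬ (3 : ℤ) ^ j ∣ 2 * A * u ^ 3 - B := fun u hu =>
      hAB ⟨hA, (dvd_sub_right ((hA.mul_left 2).mul_right _)).1
        ((dvd_pow_self 3 (by omega)).trans hu)⟩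
    rw [filter_false_of_mem fun u _ h => hnone u h.2, card_empty]
    exact Nat.zero_le _
  have h2A : ¬ (3 : ℤ) ∣ 2 * A := fun h =>
    hA ((Int.prime_three.dvd_mul.1 h).resolve_left (by norm_num))
  refine card_le_of_modEq (D := 3 ^ (j - 1)) (by positivity) (fun u hu => ?_) fun a ha b hb => ?_
  · rw [mem_range, ← pow_add, show j - 1 + (l - j + 1) = l by omega]
    exact mem_range.1 (mem_filter.1 hu).1
  obtain ⟨-, ha3, haj⟩ := mem_filter.1 ha
  obtain ⟨-, hb3, hbj⟩ := mem_filter.1 hb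
  have hcube : (3 : ℤ) ^ j ∣ (a : ℤ) ^ 3 - b ^ 3 := by
    refine Int.prime_three.pow_dvd_of_dvd_mul_left j h2A ?_
    convert dvd_sub haj hbj using 1
    ring
  have hab : ¬ (3 : ℤ) ∣ a * b := fun h => by
    rcases Int.prime_three.dvd_mul.1 h with h | h <;> omega
  refine (Nat.modEq_iff_dvd.2 ?_).symm
  push_cast
  exact Int.three_pow_pred_dvd_sub_of_dvd_cube_sub hab hcube

lemma exists_eq_pow_mul_of_gcd_eq {p m k : ℕ} (hp : p.Prime) (hkm : k < m) {A B : ℤ}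
    (h : Nat.gcd (p ^ m) (Int.gcd A B) = p ^ k) :
    ∃ A' B' : ℤ, A = p ^ k * A' ∧ B = p ^ k * B' ∧ ¬ ((p : ℤ) ∣ A' ∧ (p : ℤ) ∣ B') := by
  have hk : ((p ^ k : ℕ) : ℤ) ∣ Int.gcd A B :=
    Int.natCast_dvd_natCast.2 (h ▸ Nat.gcd_dvd_right _ _)
  push_cast at hk
  obtain ⟨A', rfl⟩ := hk.trans (Int.gcd_dvd_left _ _)
  obtain ⟨B', rfl⟩ := hk.trans (Int.gcd_dvd_right _ _)
  refine ⟨A', B', rfl, rfl, fun ⟨hA, hB⟩ => ?_⟩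
  have hdvd : ((p ^ (k + 1) : ℕ) : ℤ) ∣ Int.gcd (p ^ k * A') (p ^ k * B') := by
    push_cast
    exact Int.dvd_coe_gcd (pow_succ (p : ℤ) k ▸ mul_dvd_mul_left _ hA)
      (pow_succ (p : ℤ) k ▸ mul_dvd_mul_left _ hB)
  have := Nat.dvd_gcd (pow_dvd_pow p hkm) (Int.natCast_dvd_natCast.1 hdvd)
  rw [h, Nat.pow_dvd_pow_iff_le_right hp.one_lt] at this
  omega

lemma three_pow_le_rpow_mul_rpow {m k t : ℕ} (h : 4 * t ≤ 4 + 3 * m + k) :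
    (3 : ℝ) ^ t ≤ 3 ^ (1 + 3 * (m : ℝ) / 4) * ((3 ^ k : ℕ) : ℝ) ^ ((1 : ℝ) / 4) := by
  rw [Nat.cast_pow, Nat.cast_ofNat, ← Real.rpow_natCast 3 k, ← Real.rpow_natCast 3 t,
    ← Real.rpow_mul (by norm_num), ← Real.rpow_add (by norm_num)]
  apply Real.rpow_le_rpow_of_exponent_le (by norm_num)
  have : (4 * t : ℝ) ≤ 4 + 3 * m + k := by exact_mod_cast h
  linarith

theorem stmt5_general (m : ℕ) (A B : ℤ) :
    ‖T (3 ^ m) A B‖ ≤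
      (3 : ℝ) ^ (1 + 3 * (m : ℝ) / 4) * (Nat.gcd (3 ^ m) (Int.gcd A B) : ℝ) ^ ((1 : ℝ) / 4) := by
  obtain ⟨k, -, hgcd⟩ : ∃ k ≤ m, Nat.gcd (3 ^ m) (Int.gcd A B) = 3 ^ k :=
    (Nat.dvd_prime_pow Nat.prime_three).1 (Nat.gcd_dvd_left _ _)
  rw [hgcd]
  rcases le_or_gt m (k + 1) with hmk | hkm
  · exact (norm_T_le _ A B).trans
      (by exact_mod_cast three_pow_le_rpow_mul_rpow (t := m) (by omega))
  obtain ⟨A, B, rfl, rfl, hAB⟩ := exists_eq_pow_mul_of_gcd_eq Nat.prime_three (by omega) hgcd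
  simp only [Nat.cast_ofNat] at hAB ⊢
  set j := (m - k) / 2
  set l := m - k - j
  have hml : m = l + (k + j) := by omega
  have hL : ∀ C : ℤ, (3 : ℤ) ^ (l + (k + j)) ∣ ((3 : ℤ) ^ l) ^ 2 * (3 ^ k * C) := fun C => by
    rw [← pow_mul, ← mul_assoc, ← pow_add]
    exact (pow_dvd_pow 3 (by omega)).mul_right C
  have hT := norm_T_prime_pow_le Nat.prime_three (l := l) (j := k + j) (by omega)
    (by exact_mod_cast hL A) (by exact_mod_cast hL B)
  simp only [Nat.cast_ofNat] at hT
  calc ‖T (3 ^ m) _ _‖ ≤ 3 ^ (k + j) * 3 ^ (l - j + 1) := by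
        rw [hml]
        refine hT.trans (mul_le_mul_of_nonneg_left ?_ (by positivity))
        exact_mod_cast card_filter_cube_dvd_le (by omega) (by omega) k hAB
    _ = 3 ^ (m + 1 - j) := by rw [← pow_add]; congr 1; omega
    _ ≤ _ := three_pow_le_rpow_mul_rpow (by omega)

theorem stmt5 (m : ℕ) (hm : 1 ≤ m) (A B : ℤ) :
    ‖T (3 ^ m) A B‖ ≤
      (3 : ℝ) ^ (1 + 3 * (m : ℝ) / 4) * (Nat.gcd (3 ^ m) (Int.gcd A B) : ℝ) ^ ((1 : ℝ) / 4) :=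
  stmt5_general m A B
end

section
/- For odd $m \geq 1$ and integers $A, B$, one has $\sum_{x \bmod 2^{m+1}, 2\nmid x} e((Ax^3 + 2B)\bar x / 2^{m+1}) = 2 \sum_{n \bmod 2^m, 2 \nmid n} e((An^2 + 2B\bar n)/2^{m+1})$, where in each sum $\bar{\cdot}$ denotes inversion modulo $2^{m+1}$. -/
lemma e_add_int (x : ℝ) (k : ℤ) : e (x + k) = e x := by
  unfold e
  push_cast
  rw [mul_add, Complex.exp_add]
  have : Complex.exp (2 * Real.pi * Complex.I * k) = 1 := by
    rw [show (2 * (Real.pi:ℂ) * Complex.I * k) = k * (2 * Real.pi * Complex.I) by ring]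
    exact Complex.exp_int_mul_two_pi_mul_I k
  rw [this, mul_one]

lemma e_congr {N : ℕ} (hN : N ≠ 0) {a b : ℤ} (h : (a : ZMod N) = (b : ZMod N)) :
    e ((a : ℝ) / N) = e ((b : ℝ) / N) := by
  have hmod : (a : ℤ) ≡ b [ZMOD (N:ℤ)] := (ZMod.intCast_eq_intCast_iff _ _ _).mp h
  obtain ⟨k, hk⟩ := hmod.dvd
  have hb : a = b + N * (-k) := by linarith [hk]
  have hNne : (N : ℝ) ≠ 0 := Nat.cast_ne_zero.mpr hN
  rw [hb]
  push_cast
  rw [show ((b:ℝ) + N * (-k)) / N = (b:ℝ)/N + (-k : ℤ) by push_cast; field_simp]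
  exact e_add_int _ _

lemma key (m : ℕ) (hm : 1 ≤ m) (A B : ℤ) (x n : ℕ) (hx : ¬ 2 ∣ x) (hn : ¬ 2 ∣ n)
    (h : (x : ZMod (2^(m+1))) = n ∨ (x : ZMod (2^(m+1))) = n + 2^m) :
    (((A * (x:ℤ)^3 + 2*B) * (((x : ZMod (2^(m+1))))⁻¹.val : ℤ) : ℤ) : ZMod (2^(m+1))) =
    (((A * (n:ℤ)^2 + 2*B * (((n : ZMod (2^(m+1))))⁻¹.val : ℤ) : ℤ)) : ZMod (2^(m+1))) := by
  haveI : NeZero (2^(m+1)) := ⟨by positivity⟩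
  set N := 2^(m+1) with hNdef
  set X : ZMod N := (x : ZMod N) with hX
  set Y : ZMod N := (n : ZMod N) with hY
  have hXu : IsUnit X := by
    rw [hX, ZMod.isUnit_iff_coprime]
    exact Nat.Coprime.pow_right _ (((Nat.prime_two.coprime_iff_not_dvd).mpr hx).symm)
  have hYu : IsUnit Y := by
    rw [hY, ZMod.isUnit_iff_coprime]
    exact Nat.Coprime.pow_right _ (((Nat.prime_two.coprime_iff_not_dvd).mpr hn).symm)
  have h2t : (2 : ZMod N) * 2^m = 0 := by
    have := ZMod.natCast_self N
    rw [hNdef] at this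
    push_cast at this
    rw [← this, pow_succ]; ring
  have hsq : X^2 = Y^2 ∧ 2 * X⁻¹ = 2 * Y⁻¹ := by
    rcases h with h | h
    · rw [hX, hY] at *; rw [h]; exact ⟨rfl, rfl⟩
    · have hx2 : X = Y + 2^m := h
      have ht2 : (2:ZMod N)^m * 2^m = 0 := by
        have h1 : (2:ZMod N)^m = 2^(m-1) * 2 := by
          rw [← pow_succ]; congr 1; omega
        calc (2:ZMod N)^m * 2^m = 2^(m-1) * (2 * 2^m) := by rw [h1]; ring
          _ = 0 := by rw [h2t, mul_zero]
      constructor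
      · rw [hx2]
        have : (Y + 2^m)^2 = Y^2 + (2 * 2^m) * Y + 2^m * 2^m := by ring
        rw [this, h2t, ht2]; ring
      · apply (hXu.mul hYu).mul_right_cancel
        rw [show 2 * X⁻¹ * (X * Y) = 2 * (X * X⁻¹) * Y by ring,
          show 2 * Y⁻¹ * (X * Y) = 2 * (Y * Y⁻¹) * X by ring,
          ZMod.mul_inv_of_unit _ hXu, ZMod.mul_inv_of_unit _ hYu, hx2]
        rw [show (2:ZMod N) * 1 * (Y + 2^m) = 2 * 1 * Y + 2 * 2^m by ring, h2t]
        ring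
  obtain ⟨hsq, hinv⟩ := hsq
  have hvx : (((X⁻¹.val : ℤ)) : ZMod N) = X⁻¹ := by
    push_cast
    simp [ZMod.natCast_val, ZMod.cast_id]
  have hvy : (((Y⁻¹.val : ℤ)) : ZMod N) = Y⁻¹ := by
    push_cast
    simp [ZMod.natCast_val, ZMod.cast_id]
  push_cast
  rw [show ((x:ZMod N)) = X from rfl, show ((n:ZMod N)) = Y from rfl]
  rw [show (((X⁻¹.val : ℕ)) : ZMod N) = X⁻¹ by exact_mod_cast hvx,
      show (((Y⁻¹.val : ℕ)) : ZMod N) = Y⁻¹ by exact_mod_cast hvy]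
  have hx3 : X^3 * X⁻¹ = X^2 := by
    rw [show X^3 * X⁻¹ = X^2 * (X * X⁻¹) by ring, ZMod.mul_inv_of_unit _ hXu, mul_one]
  calc ((A:ZMod N) * X^3 + 2*B) * X⁻¹ = (A:ZMod N) * (X^3 * X⁻¹) + B * (2 * X⁻¹) := by ring
    _ = (A:ZMod N) * Y^2 + B * (2 * Y⁻¹) := by rw [hx3, hsq, hinv]
    _ = (A:ZMod N) * Y^2 + 2*B*Y⁻¹ := by ring

theorem stmt7 (m : ℕ) (hm : 1 ≤ m) (hodd : Odd m) (A B : ℤ) :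
    (∑ x ∈ (Finset.range (2 ^ (m + 1))).filter (fun x => ¬ 2 ∣ x),
        e ((((A * (x : ℤ) ^ 3 + 2 * B) * (((x : ZMod (2 ^ (m + 1))))⁻¹.val : ℤ) : ℤ) : ℝ) /
          ((2 : ℝ) ^ (m + 1)))) =
      2 * ∑ n ∈ (Finset.range (2 ^ m)).filter (fun n => ¬ 2 ∣ n),
        e (((A * (n : ℤ) ^ 2 + 2 * B * (((n : ZMod (2 ^ (m + 1))))⁻¹.val : ℤ) : ℤ) : ℝ) /
          ((2 : ℝ) ^ (m + 1))) := by
  have hN : (2^(m+1) : ℕ) ≠ 0 := by positivity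
  set g : ℕ → ℂ := fun n =>
    e (((A * (n : ℤ) ^ 2 + 2 * B * (((n : ZMod (2 ^ (m + 1))))⁻¹.val : ℤ) : ℤ) : ℝ) /
          ((2 : ℝ) ^ (m + 1))) with hg
  set f : ℕ → ℂ := fun x =>
    e ((((A * (x : ℤ) ^ 3 + 2 * B) * (((x : ZMod (2 ^ (m + 1))))⁻¹.val : ℤ) : ℤ) : ℝ) /
          ((2 : ℝ) ^ (m + 1))) with hf
  have hcast : ((2:ℝ)^(m+1)) = ((2^(m+1) : ℕ) : ℝ) := by push_cast; ring
  have hfg : ∀ x n : ℕ, ¬ 2 ∣ x → ¬ 2 ∣ n →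
      ((x : ZMod (2^(m+1))) = n ∨ (x : ZMod (2^(m+1))) = n + 2^m) → f x = g n := by
    intro x n hx hn h
    rw [hf, hg]
    simp only [hcast]
    exact e_congr hN (key m hm A B x n hx hn h)
  rw [Finset.sum_filter, show Finset.range (2^(m+1)) = Finset.range (2^m + 2^m) from by
    congr 1; rw [pow_succ]; omega, Finset.sum_range_add]
  have h1 : ∀ x ∈ Finset.range (2^m),
      (if ¬ 2 ∣ x then f x else 0) = (if ¬ 2 ∣ x then g x else 0) := by
    intro x _
    by_cases h : 2 ∣ x
    · rw [if_neg (not_not.mpr h), if_neg (not_not.mpr h)]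
    · rw [if_pos h, if_pos h]
      exact hfg x x h h (Or.inl rfl)
  have h2 : ∀ x ∈ Finset.range (2^m),
      (if ¬ 2 ∣ (2^m + x) then f (2^m + x) else 0) = (if ¬ 2 ∣ x then g x else 0) := by
    intro x _
    have hd : 2 ∣ (2^m + x) ↔ 2 ∣ x :=
      Nat.dvd_add_right (dvd_pow_self 2 (by omega))
    by_cases h : 2 ∣ x
    · rw [if_neg (not_not.mpr (hd.mpr h)), if_neg (not_not.mpr h)]
    · rw [if_pos (fun hc => h (hd.mp hc)), if_pos h]
      apply hfg _ _ (fun hc => h (hd.mp hc)) h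
      right
      push_cast
      ring
  rw [Finset.sum_congr rfl h1, Finset.sum_congr rfl h2, ← Finset.sum_filter, two_mul]
end

section
/- There exists a constant $C > 0$ such that $\sum_{c > x} 3^{\omega(c)} c^{-3/2} \leq C x^{-1/2} \log^2(2 + x)$ for all real $x > 0$, where $\omega(c)$ denotes the number of distinct prime factors of $c$. -/
/-!
`3 ^ ω(c)` is the number of ordered factorisations of the radical of `c` into three
factors, hence at most the number of ordered factorisations `c = a₁ a₂ a₃`. So the sum is
dominated by `T₃(x)`, where `T_d(y) = ∑_{a₁ ⋯ a_d > y} (a₁ ⋯ a_d) ^ (-3/2)` (`divisorTail d y`).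
These satisfy `T_{d+1}(y) = ∑ₐ a ^ (-3/2) T_d(y / a)` and `T₁(y) ≪ max(y, 1) ^ (-1/2)` by
telescoping. In each step of the recursion the terms with `a ≤ y` contribute
`y ^ (-1/2) ∑_{a ≤ y} 1/a`, which costs one factor `log (2 + y)`, and those with `a > y`
contribute `T₁(y)`; hence `T₃(x) ≪ x ^ (-1/2) log² (2 + x)`.
-/

open Finset Real
open scoped ENNReal

namespace Nat

theorem card_finMulAntidiag_le_of_dvd {d m n : ℕ} [NeZero d] (hmn : m ∣ n) (hn : n ≠ 0) :
    #(finMulAntidiag d m) ≤ #(finMulAntidiag d n) := by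
  obtain ⟨k, rfl⟩ := hmn
  have hk : k ≠ 0 := right_ne_zero_of_mul hn
  refine card_le_card_of_injOn (fun f => f * Pi.mulSingle 0 k) (fun f hf => ?_) ?_
  · have hm := (mem_finMulAntidiag.mp hf).1
    simp [Finset.prod_mul_distrib, hm, hn]
  · intro f _ g _ hfg
    funext i
    have := congrFun hfg i
    by_cases hi : i = 0
    · subst hi; simpa [hk] using this
    · simpa [Pi.mulSingle_eq_of_ne hi] using this

theorem squarefree_prod_primeFactors (n : ℕ) : Squarefree (∏ p ∈ n.primeFactors, p) :=
  Finset.squarefree_prod_of_pairwise_isCoprime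
    (fun _ hp _ hq hpq => coprime_iff_isRelPrime.mp <|
      (coprime_primes (prime_of_mem_primeFactors hp) (prime_of_mem_primeFactors hq)).mpr hpq)
    fun _ hp => (prime_of_mem_primeFactors hp).prime.squarefree

theorem pow_card_primeFactors_le_card_finMulAntidiag {d n : ℕ} [NeZero d] (hn : n ≠ 0) :
    d ^ #n.primeFactors ≤ #(finMulAntidiag d n) := by
  have hrad := squarefree_prod_primeFactors n
  calc d ^ #n.primeFactors = #(finMulAntidiag d (∏ p ∈ n.primeFactors, p)) := by
        rw [card_finMulAntidiag_of_squarefree hrad, ArithmeticFunction.cardDistinctFactors_apply,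
          ← List.card_toFinset, toFinset_factors, primeFactors_prod_primeFactors]
    _ ≤ #(finMulAntidiag d n) := card_finMulAntidiag_le_of_dvd (prod_primeFactors_dvd n) hn

end Nat

/-- Real `rpow` has `0 ^ (-3/2) = 0`, so tuples with a zero entry contribute nothing below. -/
noncomputable def rpowNegThreeHalves (n : ℕ) : ℝ≥0∞ :=
  ENNReal.ofReal ((n : ℝ) ^ (-(3 : ℝ) / 2))

@[simp]
theorem rpowNegThreeHalves_zero : rpowNegThreeHalves 0 = 0 := by
  simp [rpowNegThreeHalves, Real.zero_rpow (by norm_num : -(3 : ℝ) / 2 ≠ 0)]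

theorem rpowNegThreeHalves_mul (a b : ℕ) :
    rpowNegThreeHalves (a * b) = rpowNegThreeHalves a * rpowNegThreeHalves b := by
  rw [rpowNegThreeHalves, Nat.cast_mul, Real.mul_rpow (by positivity) (by positivity),
    ENNReal.ofReal_mul (by positivity), rpowNegThreeHalves, rpowNegThreeHalves]

noncomputable def divisorTail (d : ℕ) (y : ℝ) : ℝ≥0∞ :=
  ∑' f : Fin d → ℕ, if y < ((∏ i, f i : ℕ) : ℝ) then rpowNegThreeHalves (∏ i, f i) else 0

theorem divisorTail_one (y : ℝ) :
    divisorTail 1 y = ∑' n : ℕ, if y < n then rpowNegThreeHalves n else 0 := by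
  rw [divisorTail, ← (Equiv.funUnique (Fin 1) ℕ).symm.tsum_eq]
  simp

theorem ite_lt_mul_eq_mul_ite_div_lt (y : ℝ) (a n : ℕ) :
    (if y < ((a * n : ℕ) : ℝ) then rpowNegThreeHalves (a * n) else 0) =
      rpowNegThreeHalves a * if y / a < n then rpowNegThreeHalves n else 0 := by
  rcases Nat.eq_zero_or_pos a with rfl | ha
  · simp
  · have hcond : y < ((a * n : ℕ) : ℝ) ↔ y / a < n := by
      rw [div_lt_iff₀' (by exact_mod_cast ha), Nat.cast_mul]
    simp only [hcond, rpowNegThreeHalves_mul, mul_ite, mul_zero]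

theorem divisorTail_succ (d : ℕ) (y : ℝ) :
    divisorTail (d + 1) y = ∑' a : ℕ, rpowNegThreeHalves a * divisorTail d (y / a) := by
  rw [divisorTail, ← (Fin.consEquiv fun _ => ℕ).tsum_eq, ENNReal.tsum_prod']
  refine tsum_congr fun a => ?_
  rw [divisorTail, ← ENNReal.tsum_mul_left]
  refine tsum_congr fun f => ?_
  simpa [Fin.consEquiv, Fin.prod_univ_succ] using ite_lt_mul_eq_mul_ite_div_lt y a (∏ i, f i)

theorem rpow_neg_three_halves_le_sub {t : ℝ} (ht : 1 ≤ t) :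
    t ^ (-(3 : ℝ) / 2) ≤ 4 * (t ^ (-(1 : ℝ) / 2) - (t + 1) ^ (-(1 : ℝ) / 2)) := by
  have ht0 : 0 < t := by linarith
  set p := t ^ (-(1 : ℝ) / 2)
  set q := (t + 1) ^ (-(1 : ℝ) / 2)
  have hp : 0 < p := rpow_pos_of_pos ht0 _
  have hq : 0 < q := rpow_pos_of_pos (by linarith) _
  have hp2 : p ^ 2 * t = 1 := by
    rw [← rpow_natCast, ← rpow_mul ht0.le]; norm_num [rpow_neg_one, ht0.ne']
  have hq2 : q ^ 2 * (t + 1) = 1 := by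
    rw [← rpow_natCast, ← rpow_mul (by linarith)]; norm_num [rpow_neg_one]; field_simp
  have h3 : t ^ (-(3 : ℝ) / 2) = p ^ 3 := by
    rw [← rpow_natCast, ← rpow_mul ht0.le]; norm_num
  have hqp : q ≤ p := rpow_le_rpow_of_nonpos ht0 (by linarith) (by norm_num)
  have hdiff : (p - q) * (p + q) = p ^ 2 * q ^ 2 := by
    linear_combination q ^ 2 * hp2 - p ^ 2 * hq2
  have hpq : p ^ 2 ≤ 2 * q ^ 2 := by nlinarith
  rw [h3]
  nlinarith [mul_pos hp hq, mul_pos (mul_pos hp hq) hp]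

theorem sum_range_rpow_neg_three_halves_le {M : ℕ} (hM : 1 ≤ M) (N : ℕ) :
    ∑ k ∈ range N, ((k + M : ℕ) : ℝ) ^ (-(3 : ℝ) / 2) ≤ 4 * (M : ℝ) ^ (-(1 : ℝ) / 2) := by
  set g : ℕ → ℝ := fun k => 4 * ((k + M : ℕ) : ℝ) ^ (-(1 : ℝ) / 2)
  calc ∑ k ∈ range N, ((k + M : ℕ) : ℝ) ^ (-(3 : ℝ) / 2)
      ≤ ∑ k ∈ range N, (g k - g (k + 1)) := sum_le_sum fun k _ => by
        have := rpow_neg_three_halves_le_sub (t := ((k + M : ℕ) : ℝ)) (by norm_cast; omega)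
        simp only [g]; push_cast at this ⊢; rw [add_right_comm (k : ℝ)]; linarith
    _ = g 0 - g N := sum_range_sub' g N
    _ ≤ 4 * (M : ℝ) ^ (-(1 : ℝ) / 2) := by
        have hgN : 0 ≤ g N := by positivity
        simp only [g, zero_add] at hgN ⊢; linarith

theorem tsum_ite_lt_rpowNegThreeHalves_le (y : ℝ) :
    ∑' n : ℕ, (if y < n then rpowNegThreeHalves n else 0) ≤
      ENNReal.ofReal (4 * max y 1 ^ (-(1 : ℝ) / 2)) := by
  set M := ⌊y⌋₊ + 1
  have hterm : ∀ n : ℕ, (if y < n then rpowNegThreeHalves n else 0) ≤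
      if M ≤ n then rpowNegThreeHalves n else 0 := by
    intro n
    rcases eq_or_ne n 0 with rfl | hn
    · simp
    · have : y < n → M ≤ n := fun hyn => (Nat.floor_lt' hn).mpr hyn
      split_ifs <;> simp_all
  have hM : max y 1 ≤ M := max_le (by simpa [M] using (Nat.lt_floor_add_one y).le) (by simp [M])
  calc ∑' n : ℕ, (if y < n then rpowNegThreeHalves n else 0)
      ≤ ∑' n : ℕ, if M ≤ n then rpowNegThreeHalves n else 0 := ENNReal.tsum_le_tsum hterm
    _ = ∑' k : ℕ, rpowNegThreeHalves (k + M) := by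
        rw [← ENNReal.summable.sum_add_tsum_nat_add',
          sum_eq_zero fun n hn => if_neg (by simpa using hn), zero_add]
        simp
    _ ≤ ENNReal.ofReal (4 * (M : ℝ) ^ (-(1 : ℝ) / 2)) := by
        refine ENNReal.tsum_le_of_sum_range_le fun N => ?_
        simp only [rpowNegThreeHalves]
        rw [← ENNReal.ofReal_sum_of_nonneg fun _ _ => by positivity]
        exact ENNReal.ofReal_le_ofReal (sum_range_rpow_neg_three_halves_le (by omega) N)
    _ ≤ ENNReal.ofReal (4 * max y 1 ^ (-(1 : ℝ) / 2)) := by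
        refine ENNReal.ofReal_le_ofReal (mul_le_mul_of_nonneg_left ?_ (by norm_num))
        exact rpow_le_rpow_of_nonpos (by positivity) hM (by norm_num)

theorem rpow_neg_three_halves_mul_div_rpow_eq {a y : ℝ} (ha : 0 < a) (hy : 0 ≤ y) :
    a ^ (-(3 : ℝ) / 2) * (y / a) ^ (-(1 : ℝ) / 2) = y ^ (-(1 : ℝ) / 2) * a⁻¹ := by
  rw [div_rpow hy ha.le, mul_div_left_comm, ← rpow_sub ha, ← rpow_neg_one]
  norm_num

theorem tsum_ite_le_mul_inv_le {y : ℝ} (hy : 0 ≤ y) (m : ℝ) (hm : 0 ≤ m) :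
    ∑' a : ℕ, (if (a : ℝ) ≤ y then ENNReal.ofReal (m * (a : ℝ)⁻¹) else 0) ≤
      ENNReal.ofReal (m * (1 + log (2 + y))) := by
  set N := ⌊y⌋₊
  have hN : (N : ℝ) ≤ y := Nat.floor_le hy
  rw [tsum_eq_sum (s := range (N + 1)) fun a ha => if_neg fun hay => ha
      (mem_range.mpr (Nat.lt_succ_of_le (Nat.le_floor hay)))]
  rw [sum_congr rfl fun a ha =>
      if_pos ((Nat.cast_le.mpr (Nat.le_of_lt_succ (mem_range.mp ha))).trans hN),
    ← ENNReal.ofReal_sum_of_nonneg fun _ _ => by positivity, ← mul_sum]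
  have hH : ∑ a ∈ range (N + 1), (a : ℝ)⁻¹ = harmonic N := by
    simp [harmonic, sum_range_succ']
  have hlog : log N ≤ log (2 + y) := by
    rcases Nat.eq_zero_or_pos N with h0 | hpos
    · simp [h0, log_nonneg (by linarith : (1 : ℝ) ≤ 2 + y)]
    · exact log_le_log (by exact_mod_cast hpos) (by linarith)
  refine ENNReal.ofReal_le_ofReal (mul_le_mul_of_nonneg_left ?_ hm)
  rw [hH]
  linarith [harmonic_le_one_add_log N]

theorem rpowNegThreeHalves_mul_ofReal_le {y : ℝ} (hy : 0 ≤ y) (a : ℕ) :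
    rpowNegThreeHalves a * ENNReal.ofReal (max (y / a) 1 ^ (-(1 : ℝ) / 2)) ≤
      (if (a : ℝ) ≤ y then ENNReal.ofReal (max y 1 ^ (-(1 : ℝ) / 2) * (a : ℝ)⁻¹) else 0) +
        if y < a then rpowNegThreeHalves a else 0 := by
  rcases Nat.eq_zero_or_pos a with rfl | hpos
  · simp
  have ha : (0 : ℝ) < a := by exact_mod_cast hpos
  rcases le_or_gt (a : ℝ) y with hay | hya
  · have hy1 : max y 1 = y := max_eq_left (le_trans (by exact_mod_cast hpos) hay)
    have hya1 : max (y / a) 1 = y / a := max_eq_left ((one_le_div ha).mpr hay)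
    rw [if_pos hay, if_neg (not_lt.mpr hay), add_zero, hy1, hya1, rpowNegThreeHalves,
      ← ENNReal.ofReal_mul (by positivity), rpow_neg_three_halves_mul_div_rpow_eq ha hy]
  · rw [if_neg (not_le.mpr hya), if_pos hya, zero_add]
    refine mul_le_of_le_one_right' (ENNReal.ofReal_le_one.mpr ?_)
    exact rpow_le_one_of_one_le_of_nonpos (le_max_right _ _) (by norm_num)

theorem tsum_rpowNegThreeHalves_mul_ofReal_le {y : ℝ} (hy : 0 ≤ y) :
    ∑' a : ℕ, rpowNegThreeHalves a * ENNReal.ofReal (max (y / a) 1 ^ (-(1 : ℝ) / 2)) ≤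
      ENNReal.ofReal (9 * max y 1 ^ (-(1 : ℝ) / 2) * log (2 + y)) := by
  set m := max y 1 ^ (-(1 : ℝ) / 2)
  have hm : 0 ≤ m := by positivity
  have hlog : 5 / 8 ≤ log (2 + y) := by
    linarith [log_two_gt_d9, log_le_log two_pos (by linarith : (2 : ℝ) ≤ 2 + y)]
  calc ∑' a : ℕ, rpowNegThreeHalves a * ENNReal.ofReal (max (y / a) 1 ^ (-(1 : ℝ) / 2))
      ≤ ∑' a : ℕ, ((if (a : ℝ) ≤ y then ENNReal.ofReal (m * (a : ℝ)⁻¹) else 0) +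
          if y < a then rpowNegThreeHalves a else 0) :=
        ENNReal.tsum_le_tsum (rpowNegThreeHalves_mul_ofReal_le hy)
    _ ≤ ENNReal.ofReal (m * (1 + log (2 + y))) + ENNReal.ofReal (4 * m) := by
        rw [ENNReal.tsum_add]
        exact add_le_add (tsum_ite_le_mul_inv_le hy m hm) (tsum_ite_lt_rpowNegThreeHalves_le y)
    _ ≤ ENNReal.ofReal (9 * m * log (2 + y)) := by
        rw [← ENNReal.ofReal_add (by positivity) (by positivity)]
        exact ENNReal.ofReal_le_ofReal (by nlinarith)

theorem divisorTail_succ_le (d : ℕ) {y : ℝ} (hy : 0 ≤ y) :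
    divisorTail (d + 1) y ≤
      ENNReal.ofReal (4 * 9 ^ d * max y 1 ^ (-(1 : ℝ) / 2) * log (2 + y) ^ d) := by
  induction d generalizing y with
  | zero => simpa [divisorTail_one] using tsum_ite_lt_rpowNegThreeHalves_le y
  | succ d ih =>
    set L := log (2 + y)
    have hL : 0 ≤ L := log_nonneg (by linarith)
    have hterm (a : ℕ) : rpowNegThreeHalves a * divisorTail (d + 1) (y / a) ≤
        ENNReal.ofReal (4 * 9 ^ d * L ^ d) *
          (rpowNegThreeHalves a * ENNReal.ofReal (max (y / a) 1 ^ (-(1 : ℝ) / 2))) := by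
      have hya : y / a ≤ y := by
        rcases Nat.eq_zero_or_pos a with rfl | ha
        · simpa using hy
        · exact div_le_self hy (by exact_mod_cast ha)
      have hLa : log (2 + y / a) ≤ L := log_le_log (by positivity) (by linarith)
      calc rpowNegThreeHalves a * divisorTail (d + 1) (y / a)
          ≤ rpowNegThreeHalves a * ENNReal.ofReal
              (4 * 9 ^ d * max (y / a) 1 ^ (-(1 : ℝ) / 2) * log (2 + y / a) ^ d) :=
            mul_le_mul_right (ih (by positivity)) _
        _ ≤ rpowNegThreeHalves a * ENNReal.ofReal
              (4 * 9 ^ d * L ^ d * max (y / a) 1 ^ (-(1 : ℝ) / 2)) := by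
            refine mul_le_mul_right (ENNReal.ofReal_le_ofReal ?_) _
            rw [mul_right_comm]
            gcongr
            exact log_nonneg (by linarith [div_nonneg hy a.cast_nonneg])
        _ = _ := by rw [ENNReal.ofReal_mul (by positivity), mul_left_comm]
    calc divisorTail (d + 1 + 1) y
        = ∑' a : ℕ, rpowNegThreeHalves a * divisorTail (d + 1) (y / a) := divisorTail_succ _ _
      _ ≤ ENNReal.ofReal (4 * 9 ^ d * L ^ d) *
            ∑' a : ℕ, rpowNegThreeHalves a * ENNReal.ofReal (max (y / a) 1 ^ (-(1 : ℝ) / 2)) := by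
          rw [← ENNReal.tsum_mul_left]
          exact ENNReal.tsum_le_tsum hterm
      _ ≤ ENNReal.ofReal (4 * 9 ^ d * L ^ d) *
            ENNReal.ofReal (9 * max y 1 ^ (-(1 : ℝ) / 2) * L) :=
          mul_le_mul_right (tsum_rpowNegThreeHalves_mul_ofReal_le hy) _
      _ = _ := by
          rw [← ENNReal.ofReal_mul (by positivity)]
          ring_nf

theorem tsum_card_finMulAntidiag_mul (d : ℕ) (g : ℕ → ℝ≥0∞) (hg : g 0 = 0) :
    ∑' n : ℕ, #(Nat.finMulAntidiag d n) * g n = ∑' f : Fin d → ℕ, g (∏ i, f i) := by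
  have hfiber (n : ℕ) :
      ∑' f : Fin d → ℕ, (if ∏ i, f i = n then g n else 0) = #(Nat.finMulAntidiag d n) * g n := by
    rcases eq_or_ne n 0 with rfl | hn
    · simp [hg]
    · rw [tsum_eq_sum (s := Nat.finMulAntidiag d n) fun f hf => if_neg (by simpa [hn] using hf),
        sum_congr rfl fun f hf => if_pos (Nat.prod_eq_of_mem_finMulAntidiag hf)]
      simp
  calc ∑' n : ℕ, #(Nat.finMulAntidiag d n) * g n
      = ∑' (n : ℕ) (f : Fin d → ℕ), if ∏ i, f i = n then g n else 0 := by simp_rw [hfiber]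
    _ = ∑' (f : Fin d → ℕ) (n : ℕ), if ∏ i, f i = n then g n else 0 := ENNReal.tsum_comm
    _ = ∑' f : Fin d → ℕ, g (∏ i, f i) := by simp [eq_comm]

theorem tsum_three_pow_card_primeFactors_le_divisorTail (x : ℝ) :
    ∑' c : {c : ℕ // x < c},
        ENNReal.ofReal (3 ^ c.1.primeFactors.card * (c.1 : ℝ) ^ (-(3 : ℝ) / 2)) ≤
      divisorTail 3 x := by
  calc ∑' c : {c : ℕ // x < c},
          ENNReal.ofReal (3 ^ c.1.primeFactors.card * (c.1 : ℝ) ^ (-(3 : ℝ) / 2))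
      = ∑' c : ℕ, if x < c then 3 ^ #c.primeFactors * rpowNegThreeHalves c else 0 := by
        refine (tsum_subtype {c : ℕ | x < c} fun c : ℕ =>
          ENNReal.ofReal (3 ^ c.primeFactors.card * (c : ℝ) ^ (-(3 : ℝ) / 2))).trans
          (tsum_congr fun c => ?_)
        simp only [Set.indicator_apply, Set.mem_ofPred_eq]
        rw [ENNReal.ofReal_mul (by positivity), ENNReal.ofReal_pow zero_le_three,
          ENNReal.ofReal_ofNat, rpowNegThreeHalves]
    _ ≤ ∑' c : ℕ, #(Nat.finMulAntidiag 3 c) * if x < c then rpowNegThreeHalves c else 0 := by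
        refine ENNReal.tsum_le_tsum fun c => ?_
        rcases eq_or_ne c 0 with rfl | hc
        · simp
        rw [mul_ite, mul_zero]
        split_ifs
        · gcongr
          exact_mod_cast Nat.pow_card_primeFactors_le_card_finMulAntidiag hc
        · rfl
    _ = divisorTail 3 x := tsum_card_finMulAntidiag_mul 3 _ (by simp)

theorem stmt10 : ∃ C : ℝ, 0 < C ∧ ∀ x : ℝ, 0 < x →
    ∑' c : {c : ℕ // x < (c : ℝ)},
        (3 : ℝ) ^ (c.1).primeFactors.card * (c.1 : ℝ) ^ (-(3 : ℝ) / 2) ≤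
      C * x ^ (-(1 : ℝ) / 2) * Real.log (2 + x) ^ 2 := by
  refine ⟨4 * 9 ^ 2, by norm_num, fun x hx => ?_⟩
  have hmax : max x 1 ^ (-(1 : ℝ) / 2) ≤ x ^ (-(1 : ℝ) / 2) :=
    rpow_le_rpow_of_nonpos hx (le_max_left x 1) (by norm_num)
  have hbound : divisorTail 3 x ≤
      ENNReal.ofReal (4 * 9 ^ 2 * x ^ (-(1 : ℝ) / 2) * log (2 + x) ^ 2) :=
    (divisorTail_succ_le 2 hx.le).trans (ENNReal.ofReal_le_ofReal (by gcongr))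
  calc ∑' c : {c : ℕ // x < (c : ℝ)},
        (3 : ℝ) ^ (c.1).primeFactors.card * (c.1 : ℝ) ^ (-(3 : ℝ) / 2)
      = (∑' c : {c : ℕ // x < (c : ℝ)},
          ENNReal.ofReal (3 ^ c.1.primeFactors.card * (c.1 : ℝ) ^ (-(3 : ℝ) / 2))).toReal := by
        rw [ENNReal.tsum_toReal_eq fun _ => ENNReal.ofReal_ne_top]
        exact tsum_congr fun c => (ENNReal.toReal_ofReal (by positivity)).symm
    _ ≤ 4 * 9 ^ 2 * x ^ (-(1 : ℝ) / 2) * log (2 + x) ^ 2 :=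
        ENNReal.toReal_le_of_le_ofReal (by positivity)
          ((tsum_three_pow_card_primeFactors_le_divisorTail x).trans hbound)
end

section
/- There exists a constant $C > 0$ such that $\sum_{c \leq x} 3^{\omega(c)} c^{-1/2} \leq C x^{1/2} \log^2(2 + x)$ for all real $x > 0$, where $\omega(c)$ is the number of distinct prime factors of $c$. -/
open Finset Real

noncomputable def Fn (n : ℕ) (S : Finset ℕ) : ℕ := ∏ p ∈ S, p ^ n.factorization p

lemma Fn_pos {n : ℕ} {S : Finset ℕ} (hS : S ⊆ n.primeFactors) : 0 < Fn n S := by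
  apply Finset.prod_pos
  intro p hp
  exact pow_pos (Nat.prime_of_mem_primeFactors (hS hp)).pos _

lemma Fn_factorization {n : ℕ} {S : Finset ℕ} (hS : S ⊆ n.primeFactors) (q : ℕ) :
    (Fn n S).factorization q = if q ∈ S then n.factorization q else 0 := by
  rw [Fn, Nat.factorization_prod (fun p hp =>
    (pow_pos (Nat.prime_of_mem_primeFactors (hS hp)).pos _).ne')]
  rw [Finsupp.finset_sum_apply]
  have : ∀ p ∈ S, ((p ^ n.factorization p).factorization) q
      = if p = q then n.factorization p else 0 := by
    intro p hp
    rw [(Nat.prime_of_mem_primeFactors (hS hp)).factorization_pow, Finsupp.single_apply]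
  rw [Finset.sum_congr rfl this, Finset.sum_ite_eq' S q (fun p => n.factorization p)]

lemma Fn_dvd {n : ℕ} (hn : n ≠ 0) {S : Finset ℕ} (hS : S ⊆ n.primeFactors) : Fn n S ∣ n := by
  rw [← Nat.factorization_le_iff_dvd (Fn_pos hS).ne' hn]
  intro q
  rw [Fn_factorization hS q]
  split <;> simp

lemma Fn_primeFactors {n : ℕ} {S : Finset ℕ} (hS : S ⊆ n.primeFactors) :
    (Fn n S).primeFactors = S := by
  ext q
  rw [← Nat.support_factorization, Finsupp.mem_support_iff, Fn_factorization hS q]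
  constructor
  · intro h
    by_contra hq
    simp [hq] at h
  · intro hq
    simp only [hq, if_true]
    have := hS hq
    rw [← Nat.support_factorization, Finsupp.mem_support_iff] at this
    exact this

lemma Fn_mul {n : ℕ} {A B : Finset ℕ} (hB : B ⊆ A) :
    Fn n B * Fn n (A \ B) = Fn n A := by
  rw [Fn, Fn, Fn, ← Finset.prod_union Finset.disjoint_sdiff,
    Finset.union_sdiff_of_subset hB]

noncomputable def phi : ((_ : ℕ) × (_ : Finset ℕ) × Finset ℕ) → ℕ × ℕ × ℕ :=
  fun t => (Fn t.1 t.2.2, Fn t.1 (t.2.1 \ t.2.2),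
    t.1 / (Fn t.1 t.2.2 * Fn t.1 (t.2.1 \ t.2.2)))

lemma phi_prod {n : ℕ} (hn : n ≠ 0) {A B : Finset ℕ} (hA : A ⊆ n.primeFactors)
    (hB : B ⊆ A) :
    (phi ⟨n, A, B⟩).1 * (phi ⟨n, A, B⟩).2.1 * (phi ⟨n, A, B⟩).2.2 = n := by
  show Fn n B * Fn n (A \ B) * (n / (Fn n B * Fn n (A \ B))) = n
  rw [Fn_mul hB]
  exact Nat.mul_div_cancel' (Fn_dvd hn hA)

def Sset (N : ℕ) : Finset ((_ : ℕ) × (_ : Finset ℕ) × Finset ℕ) :=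
  (Finset.Icc 1 N).sigma fun n => (n.primeFactors.powerset).sigma fun A => A.powerset

lemma phi_inj (N : ℕ) : ∀ t ∈ Sset N, ∀ t' ∈ Sset N, phi t = phi t' → t = t' := by
  rintro ⟨n, A, B⟩ ht ⟨n', A', B'⟩ ht' heq
  simp only [Sset, Finset.mem_sigma, Finset.mem_Icc, Finset.mem_powerset] at ht ht'
  obtain ⟨⟨hn1, -⟩, hA, hB⟩ := ht
  obtain ⟨⟨hn1', -⟩, hA', hB'⟩ := ht'
  have hn0 : n ≠ 0 := by omega
  have hn0' : n' ≠ 0 := by omega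
  have hnn : n = n' := by
    rw [← phi_prod hn0 hA hB, ← phi_prod hn0' hA' hB', heq]
  subst hnn
  have e1 : Fn n B = Fn n B' := congrArg Prod.fst heq
  have e2 : Fn n (A \ B) = Fn n (A' \ B') := congrArg (fun u => u.2.1) heq
  have eB : B = B' := by
    rw [← Fn_primeFactors (hB.trans hA), e1, Fn_primeFactors (hB'.trans hA')]
  subst eB
  have eAB : A \ B = A' \ B := by
    rw [← Fn_primeFactors (Finset.sdiff_subset.trans hA), e2,
      Fn_primeFactors (Finset.sdiff_subset.trans hA')]
  have eA : A = A' := by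
    rw [← Finset.union_sdiff_of_subset hB, eAB, Finset.union_sdiff_of_subset hB']
  subst eA; rfl


lemma sum_sqrt_inv_le (M : ℕ) :
    ∑ c ∈ Finset.Icc 1 M, (Real.sqrt c)⁻¹ ≤ 2 * Real.sqrt M := by
  induction M with
  | zero => simp
  | succ M ih =>
    rw [Finset.sum_Icc_succ_top (by omega)]
    have hs : (0:ℝ) < Real.sqrt (M+1) := Real.sqrt_pos.mpr (by positivity)
    have ht : (0:ℝ) ≤ Real.sqrt M := Real.sqrt_nonneg _
    have hs2 : Real.sqrt (M+1) * Real.sqrt (M+1) = (M:ℝ)+1 :=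
      Real.mul_self_sqrt (by positivity)
    have ht2 : Real.sqrt M * Real.sqrt M = (M:ℝ) := Real.mul_self_sqrt (by positivity)
    have key : (Real.sqrt ((M:ℕ)+1:ℕ))⁻¹ ≤ 2 * (Real.sqrt (M+1) - Real.sqrt M) := by
      push_cast
      rw [inv_le_iff_one_le_mul₀ hs]
      nlinarith [sq_nonneg (Real.sqrt (M+1) - Real.sqrt M)]
    push_cast at key ⊢
    linarith

lemma sum_inv_le_log (N : ℕ) :
    ∑ a ∈ Finset.Icc 1 N, ((a:ℝ))⁻¹ ≤ 1 + Real.log N := by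
  have h := harmonic_le_one_add_log N
  have : ((harmonic N : ℚ) : ℝ) = ∑ a ∈ Finset.Icc 1 N, ((a:ℝ))⁻¹ := by
    rw [harmonic_eq_sum_Icc]; push_cast; rfl
  linarith [this ▸ h]

lemma rpow_neg_half_eq (a : ℕ) : ((a:ℕ):ℝ) ^ (-(1:ℝ)/2) = (Real.sqrt a)⁻¹ := by
  rw [show (-(1:ℝ)/2) = -(1/2 : ℝ) by norm_num, Real.rpow_neg (Nat.cast_nonneg a),
    ← Real.sqrt_eq_rpow]

lemma Tsum_le (N : ℕ) :
    ∑ u ∈ ((Finset.Icc 1 N) ×ˢ (Finset.Icc 1 N) ×ˢ (Finset.Icc 1 N)).filter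
        (fun u => u.1 * u.2.1 * u.2.2 ≤ N),
      ((u.1 * u.2.1 * u.2.2 : ℕ) : ℝ) ^ (-(1:ℝ)/2)
    ≤ 2 * Real.sqrt N * (1 + Real.log N)^2 := by
  have hS0 : (0:ℝ) ≤ ∑ a ∈ Finset.Icc 1 N, ((a:ℝ))⁻¹ :=
    Finset.sum_nonneg fun a _ => by positivity
  have hS1 : (0:ℝ) ≤ 1 + Real.log N := le_trans hS0 (sum_inv_le_log N)
  calc ∑ u ∈ ((Finset.Icc 1 N) ×ˢ (Finset.Icc 1 N) ×ˢ (Finset.Icc 1 N)).filter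
        (fun u => u.1 * u.2.1 * u.2.2 ≤ N),
      ((u.1 * u.2.1 * u.2.2 : ℕ) : ℝ) ^ (-(1:ℝ)/2)
      = ∑ a ∈ Finset.Icc 1 N, ∑ b ∈ Finset.Icc 1 N, ∑ c ∈ Finset.Icc 1 N,
          if a * b * c ≤ N then ((a * b * c : ℕ) : ℝ) ^ (-(1:ℝ)/2) else 0 := by
        rw [Finset.sum_filter]
        simp only [Finset.sum_product]
    _ ≤ ∑ a ∈ Finset.Icc 1 N, ∑ b ∈ Finset.Icc 1 N,
          2 * Real.sqrt N * (((a:ℝ))⁻¹ * ((b:ℝ))⁻¹) := by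
        refine Finset.sum_le_sum fun a ha => Finset.sum_le_sum fun b hb => ?_
        rw [Finset.mem_Icc] at ha hb
        have ha1 : 1 ≤ a := ha.1
        have hb1 : 1 ≤ b := hb.1
        have hsa : (0:ℝ) < Real.sqrt a := Real.sqrt_pos.mpr (by positivity)
        have hsb : (0:ℝ) < Real.sqrt b := Real.sqrt_pos.mpr (by positivity)
        have hsa2 : Real.sqrt a * Real.sqrt a = (a:ℝ) := Real.mul_self_sqrt (by positivity)
        have hsb2 : Real.sqrt b * Real.sqrt b = (b:ℝ) := Real.mul_self_sqrt (by positivity)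
        calc ∑ c ∈ Finset.Icc 1 N, (if a * b * c ≤ N then ((a * b * c : ℕ) : ℝ) ^ (-(1:ℝ)/2) else 0)
            = ∑ c ∈ (Finset.Icc 1 N).filter (fun c => a * b * c ≤ N),
              ((a * b * c : ℕ) : ℝ) ^ (-(1:ℝ)/2) := (Finset.sum_filter _ _).symm
          _ ≤ ∑ c ∈ Finset.Icc 1 (N / (a * b)), ((a * b * c : ℕ) : ℝ) ^ (-(1:ℝ)/2) := by
              refine Finset.sum_le_sum_of_subset_of_nonneg ?_ (fun c _ _ => by positivity)
              intro c hc
              rw [Finset.mem_filter, Finset.mem_Icc] at hc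
              rw [Finset.mem_Icc]
              refine ⟨hc.1.1, (Nat.le_div_iff_mul_le (by positivity)).mpr ?_⟩
              calc c * (a * b) = a * b * c := by ring
                _ ≤ N := hc.2
          _ = (Real.sqrt a)⁻¹ * (Real.sqrt b)⁻¹ *
              ∑ c ∈ Finset.Icc 1 (N / (a * b)), (Real.sqrt c)⁻¹ := by
              rw [Finset.mul_sum]
              refine Finset.sum_congr rfl fun c _ => ?_
              rw [show ((a * b * c : ℕ) : ℝ) = (a:ℝ) * (b:ℝ) * (c:ℝ) by push_cast; ring,
                Real.mul_rpow (by positivity) (by positivity),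
                Real.mul_rpow (by positivity) (by positivity)]
              rw [show ((a:ℝ)) ^ (-(1:ℝ)/2) = (Real.sqrt a)⁻¹ from rpow_neg_half_eq a,
                show ((b:ℝ)) ^ (-(1:ℝ)/2) = (Real.sqrt b)⁻¹ from rpow_neg_half_eq b,
                show ((c:ℝ)) ^ (-(1:ℝ)/2) = (Real.sqrt c)⁻¹ from rpow_neg_half_eq c]
          _ ≤ (Real.sqrt a)⁻¹ * (Real.sqrt b)⁻¹ * (2 * Real.sqrt (N / (a * b) : ℕ)) := by
              refine mul_le_mul_of_nonneg_left (sum_sqrt_inv_le _) (by positivity)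
          _ ≤ 2 * Real.sqrt N * (((a:ℝ))⁻¹ * ((b:ℝ))⁻¹) := by
              have hcast : ((N / (a * b) : ℕ) : ℝ) ≤ (N:ℝ) / ((a:ℝ) * (b:ℝ)) := by
                have := Nat.cast_div_le (m := N) (n := a * b) (α := ℝ)
                push_cast at this
                exact this
              have hsqrt : Real.sqrt ((N / (a * b) : ℕ)) ≤
                  Real.sqrt N / (Real.sqrt a * Real.sqrt b) := by
                refine (Real.sqrt_le_sqrt hcast).trans ?_
                rw [Real.sqrt_div (by positivity) , Real.sqrt_mul (by positivity)]
              calc (Real.sqrt a)⁻¹ * (Real.sqrt b)⁻¹ * (2 * Real.sqrt (N / (a * b) : ℕ))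
                  ≤ (Real.sqrt a)⁻¹ * (Real.sqrt b)⁻¹ *
                    (2 * (Real.sqrt N / (Real.sqrt a * Real.sqrt b))) := by
                    refine mul_le_mul_of_nonneg_left (by linarith) (by positivity)
                _ = 2 * Real.sqrt N * (((a:ℝ))⁻¹ * ((b:ℝ))⁻¹) := by
                    have e1 : (Real.sqrt a)⁻¹ * (Real.sqrt a)⁻¹ = ((a:ℝ))⁻¹ := by
                      rw [← mul_inv, hsa2]
                    have e2 : (Real.sqrt b)⁻¹ * (Real.sqrt b)⁻¹ = ((b:ℝ))⁻¹ := by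
                      rw [← mul_inv, hsb2]
                    rw [← e1, ← e2, div_eq_mul_inv, mul_inv]
                    ring
    _ = 2 * Real.sqrt N * ((∑ a ∈ Finset.Icc 1 N, ((a:ℝ))⁻¹) *
          (∑ b ∈ Finset.Icc 1 N, ((b:ℝ))⁻¹)) := by
        rw [Finset.sum_mul_sum, Finset.mul_sum]
        refine Finset.sum_congr rfl fun a _ => ?_
        rw [Finset.mul_sum]
    _ ≤ 2 * Real.sqrt N * ((1 + Real.log N) * (1 + Real.log N)) := by
        refine mul_le_mul_of_nonneg_left ?_ (by positivity)
        exact mul_le_mul (sum_inv_le_log N) (sum_inv_le_log N) hS0 hS1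
    _ = 2 * Real.sqrt N * (1 + Real.log N)^2 := by ring

lemma three_pow_eq (P : Finset ℕ) :
    (3:ℕ) ^ P.card = ∑ A ∈ P.powerset, 2 ^ A.card := by
  have := Finset.prod_add (fun _ : ℕ => (2:ℕ)) (fun _ : ℕ => (1:ℕ)) P
  simp only [Finset.prod_const, one_pow, mul_one] at this
  norm_num at this
  exact this




lemma lhs_le (N : ℕ) :
    ∑ n ∈ Finset.Icc 1 N, (3:ℝ) ^ n.primeFactors.card * (n:ℝ) ^ (-(1:ℝ)/2)
    ≤ ∑ u ∈ ((Finset.Icc 1 N) ×ˢ (Finset.Icc 1 N) ×ˢ (Finset.Icc 1 N)).filter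
        (fun u => u.1 * u.2.1 * u.2.2 ≤ N),
      ((u.1 * u.2.1 * u.2.2 : ℕ) : ℝ) ^ (-(1:ℝ)/2) := by
  calc ∑ n ∈ Finset.Icc 1 N, (3:ℝ) ^ n.primeFactors.card * (n:ℝ) ^ (-(1:ℝ)/2)
      = ∑ t ∈ Sset N,
        (((phi t).1 * (phi t).2.1 * (phi t).2.2 : ℕ) : ℝ) ^ (-(1:ℝ)/2) := by
        rw [Sset, Finset.sum_sigma]
        refine Finset.sum_congr rfl fun n hn => ?_
        rw [Finset.sum_sigma]
        rw [Finset.mem_Icc] at hn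
        have hn0 : n ≠ 0 := by omega
        have key : ∀ A ∈ n.primeFactors.powerset, ∑ B ∈ A.powerset,
            (((phi ⟨n, A, B⟩).1 * (phi ⟨n, A, B⟩).2.1 * (phi ⟨n, A, B⟩).2.2 : ℕ) : ℝ)
              ^ (-(1:ℝ)/2)
            = ((2 ^ A.card : ℕ) : ℝ) * (n:ℝ) ^ (-(1:ℝ)/2) := by
          intro A hA
          rw [Finset.mem_powerset] at hA
          have inner : ∀ B ∈ A.powerset,
              (((phi ⟨n, A, B⟩).1 * (phi ⟨n, A, B⟩).2.1 * (phi ⟨n, A, B⟩).2.2 : ℕ) : ℝ)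
                ^ (-(1:ℝ)/2) = (n:ℝ) ^ (-(1:ℝ)/2) := by
            intro B hB
            rw [phi_prod hn0 hA (Finset.mem_powerset.mp hB)]
          rw [Finset.sum_congr rfl inner, Finset.sum_const, Finset.card_powerset,
            nsmul_eq_mul]
        rw [Finset.sum_congr rfl key, ← Finset.sum_mul, ← Nat.cast_sum, ← three_pow_eq]
        push_cast
        ring
    _ = ∑ u ∈ (Sset N).image phi,
        ((u.1 * u.2.1 * u.2.2 : ℕ) : ℝ) ^ (-(1:ℝ)/2) := by
        rw [Finset.sum_image (phi_inj N)]
    _ ≤ _ := by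
        refine Finset.sum_le_sum_of_subset_of_nonneg ?_ (fun u _ _ => by positivity)
        intro u hu
        rw [Finset.mem_image] at hu
        obtain ⟨⟨n, A, B⟩, ht, rfl⟩ := hu
        simp only [Sset, Finset.mem_sigma, Finset.mem_Icc, Finset.mem_powerset] at ht
        obtain ⟨⟨hn1, hnN⟩, hA, hB⟩ := ht
        have hn0 : n ≠ 0 := by omega
        have hBP : B ⊆ n.primeFactors := hB.trans hA
        have hABP : A \ B ⊆ n.primeFactors := Finset.sdiff_subset.trans hA
        have ha1 : 1 ≤ Fn n B := Fn_pos hBP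
        have hb1 : 1 ≤ Fn n (A \ B) := Fn_pos hABP
        have haN : Fn n B ≤ N := (Nat.le_of_dvd (by omega) (Fn_dvd hn0 hBP)).trans hnN
        have hbN : Fn n (A \ B) ≤ N :=
          (Nat.le_of_dvd (by omega) (Fn_dvd hn0 hABP)).trans hnN
        have habdvd : Fn n B * Fn n (A \ B) ∣ n := by
          rw [Fn_mul hB]; exact Fn_dvd hn0 hA
        have hc1 : 1 ≤ n / (Fn n B * Fn n (A \ B)) :=
          (Nat.one_le_div_iff (by positivity)).mpr (Nat.le_of_dvd (by omega) habdvd)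
        have hcN : n / (Fn n B * Fn n (A \ B)) ≤ N := (Nat.div_le_self _ _).trans hnN
        have hprod := phi_prod hn0 hA hB
        simp only [Finset.mem_filter, Finset.mem_product, Finset.mem_Icc, phi] at *
        refine ⟨⟨⟨ha1, haN⟩, ⟨hb1, hbN⟩, hc1, hcN⟩, ?_⟩
        omega

theorem stmt11 : ∃ C : ℝ, 0 < C ∧ ∀ x : ℝ, 0 < x →
    ∑ c ∈ Finset.Icc 1 ⌊x⌋₊,
        (3 : ℝ) ^ c.primeFactors.card * (c : ℝ) ^ (-(1 : ℝ) / 2) ≤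
      C * x ^ ((1 : ℝ) / 2) * Real.log (2 + x) ^ 2 := by
  refine ⟨18, by norm_num, fun x hx => ?_⟩
  set N := ⌊x⌋₊ with hN
  have hchain := (lhs_le N).trans (Tsum_le N)
  have hRnn : (0:ℝ) ≤ 18 * x ^ ((1:ℝ)/2) * Real.log (2 + x) ^ 2 :=
    mul_nonneg (mul_nonneg (by norm_num) (Real.rpow_nonneg hx.le _)) (sq_nonneg _)
  by_cases hN0 : N = 0
  · rw [hN0, show Finset.Icc 1 0 = (∅ : Finset ℕ) from Finset.Icc_eq_empty (by omega),
      Finset.sum_empty]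
    exact hRnn
  · have hN1 : 1 ≤ N := Nat.one_le_iff_ne_zero.mpr hN0
    have hxN : (N:ℝ) ≤ x := Nat.floor_le hx.le
    have hNpos : (0:ℝ) < N := by exact_mod_cast hN1
    have hsqrt : Real.sqrt N ≤ x ^ ((1:ℝ)/2) := by
      rw [show ((1:ℝ)/2) = 1/(2:ℝ) by norm_num, ← Real.sqrt_eq_rpow]
      exact Real.sqrt_le_sqrt hxN
    have hlogN0 : (0:ℝ) ≤ Real.log N := Real.log_nonneg (by exact_mod_cast hN1)
    have hL2 : Real.log 2 ≤ Real.log (2 + x) := Real.log_le_log (by norm_num) (by linarith)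
    have hlogx : Real.log N ≤ Real.log (2 + x) :=
      Real.log_le_log hNpos (by linarith)
    have hhalf : (1:ℝ)/2 < Real.log 2 := by
      have := Real.log_two_gt_d9
      linarith
    have hlog : 1 + Real.log N ≤ 3 * Real.log (2 + x) := by linarith
    have hLnn : (0:ℝ) ≤ Real.log (2 + x) := by linarith
    calc ∑ c ∈ Finset.Icc 1 N, (3:ℝ) ^ c.primeFactors.card * (c:ℝ) ^ (-(1:ℝ)/2)
        ≤ 2 * Real.sqrt N * (1 + Real.log N) ^ 2 := hchain
      _ ≤ 2 * x ^ ((1:ℝ)/2) * (3 * Real.log (2 + x)) ^ 2 := by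
          refine mul_le_mul ?_ ?_ (sq_nonneg _) (by positivity)
          · linarith [Real.sqrt_nonneg (N:ℝ)]
          · exact pow_le_pow_left₀ (by linarith) hlog 2
      _ = 18 * x ^ ((1:ℝ)/2) * Real.log (2 + x) ^ 2 := by ring
end

section
/- There exist constants $c_1, c_2 > 0$ such that for all $a > 0$: $\frac{c_1}{a(1+a)} \leq \int_{-\pi}^{\pi} \min\left\{1, \left(\frac{|\sin\theta|}{a}\right)^2\right\} \frac{d\theta}{\sin^2\theta} \leq \frac{c_2}{a(1+a)}$. -/
/-!
Away from the zeros of `sin`, the integrand equals `1 / max(a, |sin θ|)²`. It is invariant under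
`θ ↦ -θ` and `θ ↦ π - θ`, so the integral is four times the integral over `(0, π/2)`. There
Jordan's inequality `2θ/π ≤ sin θ ≤ θ` gives `(a + θ)/π ≤ max(a, sin θ) ≤ a + θ`, so the integrand
lies between `1/(a + θ)²` and `π²/(a + θ)²`, and `∫₀^{π/2} (a + θ)⁻² = (π/2) / (a (a + π/2))`,
which is within a factor `π/2` of `1 / (a (1 + a))`.
-/

open Real MeasureTheory intervalIntegral

section Symmetrization

variable {E : Type*} [NormedAddCommGroup E] [NormedSpace ℝ E] {f : ℝ → E} {L : ℝ}

theorem integral_neg_self_eq_four_smul_of_symmetric (hf : LocallyIntegrable f)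
    (heven : ∀ x, f (-x) = f x) (hrefl : ∀ x, f (L - x) = f x) :
    ∫ x in (-L)..L, f x = (4 : ℝ) • ∫ x in 0..L / 2, f x := by
  have hf' (b c : ℝ) : IntervalIntegrable f volume b c :=
    (hf.integrableOn_isCompact isCompact_uIcc).intervalIntegrable
  have hleft : ∫ x in (-L)..0, f x = ∫ x in 0..L, f x := by
    simpa [heven] using (integral_comp_neg (a := 0) (b := L) f).symm
  have hright : ∫ x in (L / 2)..L, f x = ∫ x in 0..L / 2, f x := by
    simpa [hrefl, sub_half] using (integral_comp_sub_left (a := 0) (b := L / 2) f L).symm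
  rw [← integral_add_adjacent_intervals (hf' _ 0) (hf' 0 _), hleft,
    ← integral_add_adjacent_intervals (hf' 0 (L / 2)) (hf' _ L), hright]
  module

end Symmetrization

theorem intervalIntegrable_one_div_add_sq {a b : ℝ} (ha : 0 < a) (hb : 0 ≤ b) :
    IntervalIntegrable (fun θ => 1 / (a + θ) ^ 2) volume 0 b := by
  refine (ContinuousOn.div continuousOn_const (by fun_prop) fun θ hθ => ?_).intervalIntegrable
  rw [Set.uIcc_of_le hb] at hθ
  exact pow_ne_zero 2 (by linarith [hθ.1])

theorem integral_one_div_add_sq {a b : ℝ} (ha : 0 < a) (hb : 0 ≤ b) :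
    ∫ θ in 0..b, 1 / (a + θ) ^ 2 = b / (a * (a + b)) := by
  rw [integral_eq_sub_of_hasDerivAt (f := fun θ => -(a + θ)⁻¹) (fun θ hθ => ?_)
    (intervalIntegrable_one_div_add_sq ha hb)]
  · field_simp
    ring
  · rw [Set.uIcc_of_le hb] at hθ
    convert (((hasDerivAt_id' θ).const_add a).inv (by linarith [hθ.1])).neg using 1
    · rfl
    · simp [neg_div]

noncomputable def cutoffInvSinSq (a θ : ℝ) : ℝ := min 1 (sin θ ^ 2 / a ^ 2) / sin θ ^ 2

namespace cutoffInvSinSq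

variable {a θ : ℝ}

theorem nonneg (a θ : ℝ) : 0 ≤ cutoffInvSinSq a θ :=
  div_nonneg (le_min zero_le_one (by positivity)) (sq_nonneg _)

theorem eq_one_div_max_sq (ha : 0 < a) (hθ : sin θ ≠ 0) :
    cutoffInvSinSq a θ = 1 / max a |sin θ| ^ 2 := by
  have hs : 0 < |sin θ| := abs_pos.mpr hθ
  rw [cutoffInvSinSq, ← sq_abs (sin θ)]
  rcases le_total a |sin θ| with h | h
  · rw [max_eq_right h, min_eq_left ((one_le_div (by positivity)).2 (by gcongr))]
  · rw [max_eq_left h, min_eq_right ((div_le_one (by positivity)).2 (by gcongr))]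
    field_simp

theorem le_one_div_sq (ha : 0 < a) (θ : ℝ) : cutoffInvSinSq a θ ≤ 1 / a ^ 2 := by
  by_cases hθ : sin θ = 0
  · rw [cutoffInvSinSq, hθ, zero_pow two_ne_zero, div_zero]
    positivity
  · rw [eq_one_div_max_sq ha hθ]
    gcongr
    exact le_max_left _ _

theorem locallyIntegrable (ha : 0 < a) : LocallyIntegrable (cutoffInvSinSq a) :=
  (locallyIntegrable_const (1 / a ^ 2)).mono
    (by unfold cutoffInvSinSq; exact Measurable.aestronglyMeasurable (by fun_prop))
    (.of_forall fun θ => by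
      rw [Real.norm_of_nonneg (nonneg a θ), Real.norm_of_nonneg (by positivity)]
      exact le_one_div_sq ha θ)

theorem intervalIntegrable (ha : 0 < a) (b c : ℝ) :
    IntervalIntegrable (cutoffInvSinSq a) volume b c :=
  ((locallyIntegrable ha).integrableOn_isCompact isCompact_uIcc).intervalIntegrable

theorem neg (a θ : ℝ) : cutoffInvSinSq a (-θ) = cutoffInvSinSq a θ := by
  simp only [cutoffInvSinSq, sin_neg, neg_sq]

theorem pi_sub (a θ : ℝ) : cutoffInvSinSq a (π - θ) = cutoffInvSinSq a θ := by
  simp only [cutoffInvSinSq, sin_pi_sub]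

theorem one_div_add_sq_le (ha : 0 < a) (h0 : 0 < θ) (hπ : θ < π) :
    1 / (a + θ) ^ 2 ≤ cutoffInvSinSq a θ := by
  have hsin := sin_pos_of_pos_of_lt_pi h0 hπ
  rw [eq_one_div_max_sq ha hsin.ne', abs_of_pos hsin]
  gcongr
  exact max_le (by linarith) (by linarith [sin_le h0.le])

theorem le_pi_sq_div_add_sq (ha : 0 < a) (h0 : 0 < θ) (hπ : θ ≤ π / 2) :
    cutoffInvSinSq a θ ≤ π ^ 2 / (a + θ) ^ 2 := by
  have hjordan : 2 / π * θ ≤ sin θ := mul_le_sin h0.le hπ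
  have hsin : 0 < sin θ := lt_of_lt_of_le (by positivity) hjordan
  rw [eq_one_div_max_sq ha hsin.ne', abs_of_pos hsin]
  set M := max a (sin θ)
  have hM : a + θ ≤ π * M := by
    have h2θ : 2 * θ ≤ π * sin θ := by
      rwa [div_mul_eq_mul_div, div_le_iff₀ pi_pos, mul_comm (sin θ)] at hjordan
    nlinarith [le_max_left a (sin θ), le_max_right a (sin θ), pi_gt_three]
  calc 1 / M ^ 2 = π ^ 2 / (π * M) ^ 2 := by field_simp
    _ ≤ π ^ 2 / (a + θ) ^ 2 := by gcongr

end cutoffInvSinSq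

section Integrals

variable {a : ℝ}

theorem one_div_mul_one_add_le_integral_one_div_add_sq {b : ℝ} (ha : 0 < a) (hb : 1 ≤ b) :
    1 / (a * (1 + a)) ≤ ∫ θ in 0..b, 1 / (a + θ) ^ 2 := by
  rw [integral_one_div_add_sq ha (by linarith), div_le_div_iff₀ (by positivity) (by positivity)]
  nlinarith [mul_nonneg (sq_nonneg a) (sub_nonneg.2 hb)]

theorem integral_one_div_add_sq_le {b : ℝ} (ha : 0 < a) (hb : 1 ≤ b) :
    ∫ θ in 0..b, 1 / (a + θ) ^ 2 ≤ b / (a * (1 + a)) := by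
  rw [integral_one_div_add_sq ha (by linarith)]
  gcongr b / (a * ?_)
  linarith

theorem integral_cutoffInvSinSq_eq_four_mul (ha : 0 < a) :
    ∫ θ in (-π)..π, cutoffInvSinSq a θ = 4 * ∫ θ in 0..π / 2, cutoffInvSinSq a θ :=
  integral_neg_self_eq_four_smul_of_symmetric (cutoffInvSinSq.locallyIntegrable ha)
    (cutoffInvSinSq.neg a) (cutoffInvSinSq.pi_sub a)

theorem integral_one_div_add_sq_le_integral_cutoffInvSinSq (ha : 0 < a) :
    ∫ θ in 0..π / 2, 1 / (a + θ) ^ 2 ≤ ∫ θ in 0..π / 2, cutoffInvSinSq a θ := by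
  refine integral_mono_on_of_le_Ioo (by positivity)
    (intervalIntegrable_one_div_add_sq ha (by positivity))
    (cutoffInvSinSq.intervalIntegrable ha _ _) fun θ hθ =>
    cutoffInvSinSq.one_div_add_sq_le ha hθ.1 (by linarith [hθ.2, pi_pos])

theorem integral_cutoffInvSinSq_le_pi_sq_mul (ha : 0 < a) :
    ∫ θ in 0..π / 2, cutoffInvSinSq a θ ≤ π ^ 2 * ∫ θ in 0..π / 2, 1 / (a + θ) ^ 2 := by
  rw [← intervalIntegral.integral_const_mul]
  refine integral_mono_on_of_le_Ioo (by positivity) (cutoffInvSinSq.intervalIntegrable ha _ _)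
    ((intervalIntegrable_one_div_add_sq ha (by positivity)).const_mul _) fun θ hθ => ?_
  rw [mul_one_div]
  exact cutoffInvSinSq.le_pi_sq_div_add_sq ha hθ.1 hθ.2.le

end Integrals

theorem stmt12 : ∃ c₁ c₂ : ℝ, 0 < c₁ ∧ 0 < c₂ ∧ ∀ a : ℝ, 0 < a →
    c₁ / (a * (1 + a)) ≤
        (∫ θ in (-Real.pi)..Real.pi, min 1 (Real.sin θ ^ 2 / a ^ 2) / Real.sin θ ^ 2) ∧
      (∫ θ in (-Real.pi)..Real.pi, min 1 (Real.sin θ ^ 2 / a ^ 2) / Real.sin θ ^ 2) ≤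
        c₂ / (a * (1 + a)) := by
  refine ⟨4, 2 * π ^ 3, by norm_num, by positivity, fun a ha => ?_⟩
  have hb : 1 ≤ π / 2 := by linarith [pi_gt_three]
  have hsymm := integral_cutoffInvSinSq_eq_four_mul ha
  constructor
  · calc 4 / (a * (1 + a)) = 4 * (1 / (a * (1 + a))) := by ring
      _ ≤ 4 * ∫ θ in 0..π / 2, 1 / (a + θ) ^ 2 := by
        gcongr; exact one_div_mul_one_add_le_integral_one_div_add_sq ha hb
      _ ≤ 4 * ∫ θ in 0..π / 2, cutoffInvSinSq a θ := by
        gcongr; exact integral_one_div_add_sq_le_integral_cutoffInvSinSq ha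
      _ = ∫ θ in (-π)..π, cutoffInvSinSq a θ := hsymm.symm
  · calc ∫ θ in (-π)..π, cutoffInvSinSq a θ = 4 * ∫ θ in 0..π / 2, cutoffInvSinSq a θ := hsymm
      _ ≤ 4 * (π ^ 2 * ∫ θ in 0..π / 2, 1 / (a + θ) ^ 2) := by
        gcongr; exact integral_cutoffInvSinSq_le_pi_sq_mul ha
      _ ≤ 4 * (π ^ 2 * (π / 2 / (a * (1 + a)))) := by
        gcongr; exact integral_one_div_add_sq_le ha hb
      _ = 2 * π ^ 3 / (a * (1 + a)) := by ring
end

section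
/- For every $K > 1$ there is a constant $C_K$ such that for any positive integer $k$, $\sum_{h \mid k} h^{-1/2} K^{\omega(h)} \leq C_K \tau(k)$, where $\tau(k)$ is the number of divisors of $k$ and $\omega(h)$ the number of distinct prime factors of $h$. -/
theorem stmt13 (K : ℝ) (hK : 1 < K) : ∃ C : ℝ, 0 < C ∧ ∀ k : ℕ, 0 < k →
    ∑ h ∈ k.divisors, (h : ℝ) ^ (-(1 : ℝ) / 2) * K ^ h.primeFactors.card ≤
      C * (k.divisors.card : ℝ) := by
  have hK0 : (0:ℝ) < K := lt_trans one_pos hK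
  set M := ⌈K^2⌉₊ with hM
  refine ⟨K ^ M, by positivity, ?_⟩
  intro k hk
  have key : ∀ h ∈ k.divisors, (h : ℝ) ^ (-(1:ℝ) / 2) * K ^ h.primeFactors.card ≤ K ^ M := by
    intro h hh
    have hpos : 0 < h := Nat.pos_of_mem_divisors hh
    have h0 : (0:ℝ) < (h:ℝ) := by exact_mod_cast hpos
    set S := h.primeFactors with hS
    set S₂ := S.filter (fun p => ¬ p < M) with hS₂
    have hsplit : K ^ S.card = (∏ p ∈ S.filter (fun p => p < M), K) * ∏ p ∈ S₂, K := by
      rw [Finset.prod_filter_mul_prod_filter_not, Finset.prod_const]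
    have h1 : (∏ p ∈ S.filter (fun p => p < M), K) ≤ K ^ M := by
      rw [Finset.prod_const]
      apply pow_le_pow_right₀ hK.le
      have : S.filter (fun p => p < M) ⊆ Finset.range M := by
        intro p hp
        simp only [Finset.mem_filter] at hp
        exact Finset.mem_range.mpr hp.2
      simpa using Finset.card_le_card this
    have h2 : (∏ p ∈ S₂, K) ≤ Real.sqrt h := by
      have step1 : (∏ p ∈ S₂, K) ≤ ∏ p ∈ S₂, Real.sqrt p := by
        apply Finset.prod_le_prod (fun p _ => hK0.le)
        intro p hp
        simp only [hS₂, Finset.mem_filter, not_lt] at hp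
        have hKp : K^2 ≤ (p:ℝ) := le_trans (Nat.le_ceil _) (by exact_mod_cast hp.2)
        have := Real.sqrt_le_sqrt hKp
        rwa [Real.sqrt_sq hK0.le] at this
      have step2 : (∏ p ∈ S₂, Real.sqrt p) = Real.sqrt (∏ p ∈ S₂, (p:ℝ)) := by
        rw [Real.sqrt_eq_rpow, ← Real.finset_prod_rpow _ _ (fun p _ => by positivity)]
        simp [Real.sqrt_eq_rpow]
      have hdvd : (∏ p ∈ S₂, p) ∣ h := by
        refine dvd_trans (Finset.prod_dvd_prod_of_subset _ _ _ (Finset.filter_subset _ _)) ?_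
        exact Nat.prod_primeFactors_dvd h
      have hle : ((∏ p ∈ S₂, p : ℕ) : ℝ) ≤ (h:ℝ) := by
        exact_mod_cast Nat.le_of_dvd hpos hdvd
      calc (∏ p ∈ S₂, K) ≤ ∏ p ∈ S₂, Real.sqrt p := step1
        _ = Real.sqrt (∏ p ∈ S₂, (p:ℝ)) := step2
        _ ≤ Real.sqrt h := by
            apply Real.sqrt_le_sqrt
            rw [← Nat.cast_prod]
            exact hle
    have hKS : K ^ S.card ≤ K ^ M * Real.sqrt h := by
      rw [hsplit]
      exact mul_le_mul h1 h2 (Finset.prod_nonneg fun p _ => hK0.le) (by positivity)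
    have hrw : (h:ℝ) ^ (-(1:ℝ)/2) * Real.sqrt h = 1 := by
      rw [Real.sqrt_eq_rpow, ← Real.rpow_add h0]
      norm_num
    calc (h : ℝ) ^ (-(1:ℝ) / 2) * K ^ S.card
        ≤ (h : ℝ) ^ (-(1:ℝ) / 2) * (K ^ M * Real.sqrt h) := by
          apply mul_le_mul_of_nonneg_left hKS (by positivity)
      _ = K ^ M * ((h:ℝ) ^ (-(1:ℝ)/2) * Real.sqrt h) := by ring
      _ = K ^ M := by rw [hrw, mul_one]
  calc ∑ h ∈ k.divisors, (h : ℝ) ^ (-(1:ℝ) / 2) * K ^ h.primeFactors.card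
      ≤ ∑ _h ∈ k.divisors, K ^ M := Finset.sum_le_sum key
    _ = K ^ M * (k.divisors.card : ℝ) := by
        rw [Finset.sum_const, nsmul_eq_mul, mul_comm]
end

section
/- For any $K > 1$ and any positive integer $k$, and any real $x \geq 2$: $\sum_{n \leq x} K^{\omega(n)} \gcd(n,k)^{1/2} \ll_K x (\log x)^{K-1} \sum_{h \mid k} h^{-1/2} K^{\omega(h)}$. -/
/-!
Split the sum according to the value `h = gcd(n, k)`, a divisor of `k`. On that fiber `h ∣ n`,
and since `ω(hm) ≤ ω(h) + ω(m)` the fiber contributes at most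
`h^{1/2} K^{ω(h)} ∑_{m ≤ x/h} K^{ω(m)}`.

For the remaining sum write `K^{ω(m)} = ∑_{d ∣ m, d squarefree} (K - 1)^{ω(d)}` and swap sums:
`∑_{m ≤ N} K^{ω(m)} ≤ N ∏_{p ≤ N} (1 + (K - 1)/p) ≤ N exp ((K - 1) ∑_{p ≤ x} 1/p)`.
Mertens' bound `∑_{p ≤ x} 1/p ≤ log log x + O(1)` turns this into `N (log x)^{K - 1}` up to a
constant; it follows from Chebyshev's `θ(x) ≤ x log 4` through Mertens' first theorem
`∑_{p ≤ N} log p / p ≤ log N + log 4` and a dyadic partial summation.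
-/

open Finset Real
open ArithmeticFunction hiding log

theorem sum_Icc_sum_divisors {R : Type*} [Semiring R] (g : ℕ → R) (N : ℕ) :
    ∑ n ∈ Icc 1 N, ∑ d ∈ n.divisors, g d = ∑ d ∈ Icc 1 N, g d * (N / d : ℕ) := by
  let f : ArithmeticFunction R := ⟨fun n ↦ if n = 0 then 0 else g n, if_pos rfl⟩
  have hf : ∀ n, n ≠ 0 → f n = g n := fun n hn ↦ if_neg hn
  have := sum_Ioc_mul_zeta_eq_sum f N
  rw [← Icc_add_one_left_eq_Ioc, zero_add] at this
  simp only [coe_mul_zeta_apply] at this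
  convert this using 2 with n hn n hn
  · exact sum_congr rfl fun d hd ↦ (hf d (Nat.pos_of_mem_divisors hd).ne').symm
  · rw [hf n (by grind)]

theorem sum_primesLE_log_mul_div_le (N : ℕ) :
    ∑ p ∈ Nat.primesLE N, log p * (N / p : ℕ) ≤ N * log N := by
  calc ∑ p ∈ Nat.primesLE N, log p * (N / p : ℕ)
      = ∑ p ∈ Nat.primesLE N, Λ p * (N / p : ℕ) := sum_congr rfl fun p hp ↦ by
        rw [vonMangoldt_apply_prime (Nat.prime_of_mem_primesLE hp)]
    _ ≤ ∑ d ∈ Icc 1 N, Λ d * (N / d : ℕ) := by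
        rw [Nat.primesLE_eq_filter_Icc_one]
        exact sum_le_sum_of_subset_of_nonneg (filter_subset _ _) fun _ _ _ ↦ by positivity
    _ = ∑ n ∈ Icc 1 N, log n := by simp only [← sum_Icc_sum_divisors, vonMangoldt_sum]
    _ ≤ ∑ _n ∈ Icc 1 N, log N := sum_le_sum fun n hn ↦ by
        obtain ⟨hn1, hnN⟩ := mem_Icc.mp hn
        exact log_le_log (by exact_mod_cast hn1) (by exact_mod_cast hnN)
    _ = N * log N := by simp

theorem sum_primesLE_log_div_le (N : ℕ) :
    ∑ p ∈ Nat.primesLE N, log p / p ≤ log N + log 4 := by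
  rcases N.eq_zero_or_pos with rfl | hN
  · simpa using log_nonneg (by norm_num : (1 : ℝ) ≤ 4)
  have hN' : (0 : ℝ) < N := by exact_mod_cast hN
  rw [← mul_le_mul_iff_right₀ hN', mul_sum]
  calc ∑ p ∈ Nat.primesLE N, N * (log p / p)
      ≤ ∑ p ∈ Nat.primesLE N, (log p * (N / p : ℕ) + log p) := sum_le_sum fun p _ ↦ by
        have hfloor : (N : ℝ) / p ≤ (N / p : ℕ) + 1 := by
          rw [← Nat.floor_div_eq_div (K := ℝ)]
          exact (Nat.lt_floor_add_one _).le
        calc (N : ℝ) * (log p / p) = log p * (N / p) := by ring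
          _ ≤ log p * ((N / p : ℕ) + 1) := by gcongr
          _ = _ := by ring
    _ ≤ N * log N + log 4 * N := by
        rw [sum_add_distrib, ← Chebyshev.theta_eq_sum_primesLE_log]
        exact add_le_add (sum_primesLE_log_mul_div_le N) (Chebyshev.theta_le_log4_mul_x hN'.le)
    _ = N * (log N + log 4) := by ring

theorem sum_primesLE_inv_sub_le {m n : ℕ} (hmn : m ≤ n) {c : ℝ} (hc : 0 < c)
    (hcm : c ≤ log (m + 1)) :
    ∑ p ∈ Nat.primesLE n, (p : ℝ)⁻¹ - ∑ p ∈ Nat.primesLE m, (p : ℝ)⁻¹ ≤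
      (∑ p ∈ Nat.primesLE n, log p / p - ∑ p ∈ Nat.primesLE m, log p / p) / c := by
  rw [← sum_sdiff_eq_sub (Nat.primesLE_mono hmn), ← sum_sdiff_eq_sub (Nat.primesLE_mono hmn),
    sum_div]
  refine sum_le_sum fun p hp ↦ ?_
  simp only [mem_sdiff, Nat.mem_primesLE, not_and] at hp
  obtain ⟨⟨-, hprime⟩, hpm⟩ := hp
  have hmp : (m : ℝ) + 1 ≤ p := by exact_mod_cast not_le.mp fun h ↦ hpm h hprime
  rw [le_div_iff₀ hc, div_eq_inv_mul]
  exact mul_le_mul_of_nonneg_left (hcm.trans (log_le_log (by positivity) hmp)) (by positivity)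

theorem sum_primesLE_two_pow_log_div_le (J : ℕ) :
    ∑ p ∈ Nat.primesLE (2 ^ J), log p / p ≤ (J + 2) * log 2 := by
  have := sum_primesLE_log_div_le (2 ^ J)
  rwa [Nat.cast_pow, Nat.cast_ofNat, log_pow, log_four_eq, ← add_mul] at this

/-- The weight `(J + 3) log 2 - ∑ log p / p`, which is nonnegative by Mertens' first theorem,
makes the dyadic estimate telescope. -/
theorem sum_primesLE_two_pow_inv_add_le (J : ℕ) :
    ∑ p ∈ Nat.primesLE (2 ^ (J + 1)), (p : ℝ)⁻¹ +
        ((J + 3) * log 2 - ∑ p ∈ Nat.primesLE (2 ^ (J + 1)), log p / p) / ((J + 1) * log 2) ≤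
      3 + harmonic J := by
  have hL : 0 < log 2 := log_pos one_lt_two
  induction J with
  | zero =>
    have h := sum_primesLE_inv_sub_le (m := 1) (n := 2) one_le_two hL (by norm_num)
    simp only [Nat.primesLE_one, sum_empty, sub_zero] at h
    simp only [zero_add, pow_one, Nat.cast_zero, one_mul, harmonic_zero, Rat.cast_zero, add_zero]
    rw [sub_div, mul_div_cancel_right₀ _ hL.ne']
    linarith
  | succ J ih =>
    have hblock := sum_primesLE_inv_sub_le (m := 2 ^ (J + 1)) (n := 2 ^ (J + 2))
      (Nat.pow_le_pow_right two_pos (by omega)) (c := (J + 1) * log 2) (by positivity) (by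
        calc ((J : ℝ) + 1) * log 2 = log (2 ^ (J + 1) : ℕ) := by
              push_cast
              rw [log_pow]
              push_cast
              ring
          _ ≤ log ((2 ^ (J + 1) : ℕ) + 1) := log_le_log (by positivity) (by linarith))
    have hmertens := sum_primesLE_two_pow_log_div_le (J + 2)
    set B := ∑ p ∈ Nat.primesLE (2 ^ (J + 1)), log p / p
    set B' := ∑ p ∈ Nat.primesLE (2 ^ (J + 2)), log p / p
    have hshrink : ((J + 4) * log 2 - B') / ((J + 2) * log 2) ≤
        ((J + 4) * log 2 - B') / ((J + 1) * log 2) :=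
      div_le_div_of_nonneg_left (by push_cast at hmertens; linarith) (by positivity)
        (by linarith)
    have hsplit : ((J + 4) * log 2 - B') / ((J + 1) * log 2) =
          ((J + 3) * log 2 - B) / ((J + 1) * log 2) + 1 / (J + 1) -
            (B' - B) / ((J + 1) * log 2) := by
      field_simp
      ring
    push_cast [harmonic_succ] at ih ⊢
    rw [show (J : ℝ) + 1 + 3 = J + 4 by ring, show (J : ℝ) + 1 + 1 = J + 2 by ring, ← one_div]
    linarith

theorem sum_primesLE_two_pow_inv_le (J : ℕ) :
    ∑ p ∈ Nat.primesLE (2 ^ (J + 1)), (p : ℝ)⁻¹ ≤ 4 + log J := by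
  have hweight : 0 ≤ ((J + 3) * log 2 - ∑ p ∈ Nat.primesLE (2 ^ (J + 1)), log p / p) /
      ((J + 1) * log 2) := by
    have := sum_primesLE_two_pow_log_div_le (J + 1)
    push_cast at this
    exact div_nonneg (by linarith) (by positivity)
  linarith [sum_primesLE_two_pow_inv_add_le J, harmonic_le_one_add_log J]

theorem sum_primesLE_inv_le {x : ℝ} (hx : 2 ≤ x) :
    ∑ p ∈ Nat.primesLE ⌊x⌋₊, (p : ℝ)⁻¹ ≤ log (log x) + 5 := by
  have hfloor : 2 ≤ ⌊x⌋₊ := Nat.le_floor (by exact_mod_cast hx)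
  set J := Nat.log 2 ⌊x⌋₊
  have hJ : 0 < J := Nat.log_pos one_lt_two hfloor
  have hsub : Nat.primesLE ⌊x⌋₊ ⊆ Nat.primesLE (2 ^ (J + 1)) :=
    Nat.primesLE_mono (Nat.lt_pow_succ_log_self one_lt_two _).le
  have hJx : (J : ℝ) * log 2 ≤ log x := by
    rw [← log_pow]
    refine log_le_log (by positivity) ?_
    calc (2 : ℝ) ^ J = (2 ^ J : ℕ) := by push_cast; rfl
      _ ≤ ⌊x⌋₊ := by exact_mod_cast Nat.pow_log_le_self 2 (by omega)
      _ ≤ x := Nat.floor_le (by linarith)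
  have hlogJ : log J ≤ log (log x) + 1 := by
    have hlogx : 0 < log x := log_pos (by linarith)
    calc log J ≤ log (2 * log x) :=
          log_le_log (by exact_mod_cast hJ) (by nlinarith [log_two_gt_d9])
      _ = log 2 + log (log x) := log_mul two_ne_zero hlogx.ne'
      _ ≤ log (log x) + 1 := by linarith [log_two_lt_d9]
  calc ∑ p ∈ Nat.primesLE ⌊x⌋₊, (p : ℝ)⁻¹
      ≤ ∑ p ∈ Nat.primesLE (2 ^ (J + 1)), (p : ℝ)⁻¹ :=
        sum_le_sum_of_subset_of_nonneg hsub fun _ _ _ ↦ by positivity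
    _ ≤ 4 + log J := sum_primesLE_two_pow_inv_le J
    _ ≤ log (log x) + 5 := by linarith

theorem prod_primeFactors_one_add {R : Type*} [CommSemiring R] (a : ℕ → R) {m : ℕ}
    (hm : m ≠ 0) :
    ∏ p ∈ m.primeFactors, (1 + a p) =
      ∑ d ∈ m.divisors with Squarefree d, ∏ p ∈ d.primeFactors, a p := by
  rw [prod_one_add, Nat.sum_divisors_filter_squarefree hm, Nat.factors_eq, List.toFinset_coe,
    Nat.toFinset_factors]
  refine sum_congr rfl fun t ht ↦ ?_
  have : (∏ p ∈ t, p).primeFactors = t :=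
    Nat.primeFactors_prod fun p hp ↦ Nat.prime_of_mem_primeFactors (mem_powerset.mp ht hp)
  rw [Finset.prod_val]
  exact congrArg (∏ p ∈ ·, a p) this.symm

theorem sum_squarefree_prod_le_prod_primesLE {a : ℕ → ℝ} (ha : ∀ p, 0 ≤ a p) (N : ℕ) :
    ∑ d ∈ Icc 1 N with Squarefree d, ∏ p ∈ d.primeFactors, a p ≤
      ∏ p ∈ Nat.primesLE N, (1 + a p) := by
  have hinj : Set.InjOn Nat.primeFactors ↑({d ∈ Icc 1 N | Squarefree d} : Finset ℕ) :=
    fun d hd d' hd' h ↦ calc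
      d = ∏ p ∈ d.primeFactors, p :=
          (Nat.prod_primeFactors_of_squarefree (mem_filter.mp hd).2).symm
      _ = d' := by rw [h, Nat.prod_primeFactors_of_squarefree (mem_filter.mp hd').2]
  have hsub :
      {d ∈ Icc 1 N | Squarefree d}.image Nat.primeFactors ⊆ (Nat.primesLE N).powerset := by
    simp only [subset_iff, mem_image, mem_filter, mem_Icc, mem_powerset, Nat.mem_primesLE]
    rintro _ ⟨d, ⟨⟨hd1, hdN⟩, -⟩, rfl⟩ p hp
    exact ⟨(Nat.le_of_mem_primeFactors hp).trans hdN, Nat.prime_of_mem_primeFactors hp⟩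
  rw [prod_one_add, ← sum_image (f := fun t ↦ ∏ p ∈ t, a p) hinj]
  exact sum_le_sum_of_subset_of_nonneg hsub fun t _ _ ↦ prod_nonneg fun p _ ↦ ha p

theorem sum_prod_primeFactors_one_add_le {a : ℕ → ℝ} (ha : ∀ p, 0 ≤ a p) (N : ℕ) :
    ∑ m ∈ Icc 1 N, ∏ p ∈ m.primeFactors, (1 + a p) ≤
      N * ∏ p ∈ Nat.primesLE N, (1 + a p / p) := by
  let g : ℕ → ℝ := fun d ↦ if Squarefree d then ∏ p ∈ d.primeFactors, a p else 0
  have hg : ∀ d, 0 ≤ g d := fun d ↦ by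
    unfold g; split_ifs <;> [exact prod_nonneg fun p _ ↦ ha p; rfl]
  calc ∑ m ∈ Icc 1 N, ∏ p ∈ m.primeFactors, (1 + a p)
      = ∑ m ∈ Icc 1 N, ∑ d ∈ m.divisors, g d := sum_congr rfl fun m hm ↦ by
        rw [prod_primeFactors_one_add a (by grind), sum_filter]
    _ = ∑ d ∈ Icc 1 N, g d * (N / d : ℕ) := sum_Icc_sum_divisors g N
    _ ≤ ∑ d ∈ Icc 1 N, g d * (N / d : ℝ) :=
        sum_le_sum fun d _ ↦ mul_le_mul_of_nonneg_left Nat.cast_div_le (hg d)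
    _ = N * ∑ d ∈ Icc 1 N with Squarefree d, ∏ p ∈ d.primeFactors, a p / p := by
        rw [sum_filter, mul_sum]
        refine sum_congr rfl fun d _ ↦ ?_
        unfold g
        split_ifs with hd
        · rw [prod_div_distrib, ← Nat.cast_prod, Nat.prod_primeFactors_of_squarefree hd]
          ring
        · simp
    _ ≤ N * ∏ p ∈ Nat.primesLE N, (1 + a p / p) :=
        mul_le_mul_of_nonneg_left
          (sum_squarefree_prod_le_prod_primesLE (fun p ↦ div_nonneg (ha p) p.cast_nonneg) N)
          N.cast_nonneg

theorem sum_pow_card_primeFactors_le {K x : ℝ} (hK : 1 ≤ K) (hx : 2 ≤ x) {N : ℕ}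
    (hN : N ≤ ⌊x⌋₊) :
    ∑ m ∈ Icc 1 N, K ^ #m.primeFactors ≤ exp (5 * (K - 1)) * N * log x ^ (K - 1) := by
  have hlogx : 0 < log x := log_pos (by linarith)
  have hmertens : ∑ p ∈ Nat.primesLE N, (p : ℝ)⁻¹ ≤ log (log x) + 5 :=
    (sum_le_sum_of_subset_of_nonneg (Nat.primesLE_mono hN) fun _ _ _ ↦ by positivity).trans
      (sum_primesLE_inv_le hx)
  calc ∑ m ∈ Icc 1 N, K ^ #m.primeFactors
      = ∑ m ∈ Icc 1 N, ∏ p ∈ m.primeFactors, (1 + (K - 1)) := by simp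
    _ ≤ N * ∏ p ∈ Nat.primesLE N, (1 + (K - 1) / p) :=
        sum_prod_primeFactors_one_add_le (fun _ ↦ sub_nonneg.mpr hK) N
    _ ≤ N * exp ((K - 1) * ∑ p ∈ Nat.primesLE N, (p : ℝ)⁻¹) := by
        rw [mul_sum, exp_sum]
        gcongr with p
        rw [← div_eq_mul_inv, add_comm]
        exact add_one_le_exp _
    _ ≤ N * exp ((K - 1) * (log (log x) + 5)) := by gcongr
    _ = exp (5 * (K - 1)) * N * log x ^ (K - 1) := by
        rw [rpow_def_of_pos hlogx, mul_add, exp_add]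
        ring_nf

theorem pow_card_primeFactors_mul_le {K : ℝ} (hK : 1 ≤ K) {m n : ℕ} (hm : m ≠ 0)
    (hn : n ≠ 0) :
    K ^ #(m * n).primeFactors ≤ K ^ #m.primeFactors * K ^ #n.primeFactors := by
  rw [← pow_add, Nat.primeFactors_mul hm hn]
  exact pow_le_pow_right₀ hK (card_union_le _ _)

theorem sum_Icc_filter_dvd {M : Type*} [AddCommMonoid M] (f : ℕ → M) {h : ℕ} (hh : 0 < h)
    (X : ℕ) :
    ∑ n ∈ Icc 1 X with h ∣ n, f n = ∑ m ∈ Icc 1 (X / h), f (h * m) := by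
  refine (sum_nbij' (h * ·) (· / h) ?_ ?_ ?_ ?_ fun _ _ ↦ rfl).symm
  · intro m hm
    simp only [mem_Icc, mem_filter, Nat.le_div_iff_mul_le hh] at hm ⊢
    exact ⟨⟨Nat.mul_pos hh hm.1, by linarith⟩, dvd_mul_right h m⟩
  · intro n hn
    simp only [mem_Icc, mem_filter] at hn ⊢
    obtain ⟨⟨hn1, hnX⟩, hdvd⟩ := hn
    exact ⟨(Nat.one_le_div_iff hh).mpr (Nat.le_of_dvd hn1 hdvd), Nat.div_le_div_right hnX⟩
  · exact fun m _ ↦ Nat.mul_div_cancel_left m hh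
  · exact fun n hn ↦ Nat.mul_div_cancel' (mem_filter.mp hn).2

theorem sum_pow_card_primeFactors_gcd_eq_le {K x : ℝ} (hK : 1 ≤ K) (hx : 2 ≤ x) (k : ℕ)
    {h : ℕ} (hh : 0 < h) :
    ∑ n ∈ Icc 1 ⌊x⌋₊ with n.gcd k = h, K ^ #n.primeFactors ≤
      exp (5 * (K - 1)) * (x / h) * log x ^ (K - 1) * K ^ #h.primeFactors := by
  have hxh : ((⌊x⌋₊ / h : ℕ) : ℝ) ≤ x / h :=
    Nat.cast_div_le.trans (div_le_div_of_nonneg_right (Nat.floor_le (by linarith)) h.cast_nonneg)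
  have hlog : 0 ≤ log x ^ (K - 1) := rpow_nonneg (log_nonneg (by linarith)) _
  calc ∑ n ∈ Icc 1 ⌊x⌋₊ with n.gcd k = h, K ^ #n.primeFactors
      ≤ ∑ n ∈ Icc 1 ⌊x⌋₊ with h ∣ n, K ^ #n.primeFactors := by
        refine sum_le_sum_of_subset_of_nonneg (monotone_filter_right _ ?_)
          fun _ _ _ ↦ by positivity
        rintro n - rfl
        exact Nat.gcd_dvd_left n k
    _ = ∑ m ∈ Icc 1 (⌊x⌋₊ / h), K ^ #(h * m).primeFactors := sum_Icc_filter_dvd _ hh _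
    _ ≤ ∑ m ∈ Icc 1 (⌊x⌋₊ / h), K ^ #h.primeFactors * K ^ #m.primeFactors :=
        sum_le_sum fun m hm ↦ pow_card_primeFactors_mul_le hK hh.ne' (by grind)
    _ ≤ K ^ #h.primeFactors * (exp (5 * (K - 1)) * (⌊x⌋₊ / h : ℕ) * log x ^ (K - 1)) := by
        rw [← mul_sum]
        gcongr
        exact sum_pow_card_primeFactors_le hK hx (Nat.div_le_self _ _)
    _ ≤ exp (5 * (K - 1)) * (x / h) * log x ^ (K - 1) * K ^ #h.primeFactors := by
        rw [mul_comm]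
        gcongr

theorem stmt14 (K : ℝ) (hK : 1 < K) : ∃ C : ℝ, 0 < C ∧ ∀ k : ℕ, 0 < k → ∀ x : ℝ, 2 ≤ x →
    ∑ n ∈ Finset.Icc 1 ⌊x⌋₊, K ^ n.primeFactors.card * (Nat.gcd n k : ℝ) ^ ((1 : ℝ) / 2) ≤
      C * x * Real.log x ^ (K - 1) *
        ∑ h ∈ k.divisors, (h : ℝ) ^ (-(1 : ℝ) / 2) * K ^ h.primeFactors.card := by
  refine ⟨exp (5 * (K - 1)), exp_pos _, fun k hk x hx ↦ ?_⟩
  rw [← sum_fiberwise_of_maps_to (g := (Nat.gcd · k)) (t := k.divisors)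
    fun n _ ↦ Nat.mem_divisors.mpr ⟨Nat.gcd_dvd_right n k, hk.ne'⟩, mul_sum]
  refine sum_le_sum fun h hh ↦ ?_
  have hh0 : 0 < h := Nat.pos_of_mem_divisors hh
  have hh0' : (0 : ℝ) < h := by exact_mod_cast hh0
  calc ∑ n ∈ Icc 1 ⌊x⌋₊ with n.gcd k = h,
        K ^ #n.primeFactors * (n.gcd k : ℝ) ^ ((1 : ℝ) / 2)
      = (h : ℝ) ^ ((1 : ℝ) / 2) *
          ∑ n ∈ Icc 1 ⌊x⌋₊ with n.gcd k = h, K ^ #n.primeFactors := by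
        rw [mul_sum]
        exact sum_congr rfl fun n hn ↦ by rw [(mem_filter.mp hn).2, mul_comm]
    _ ≤ (h : ℝ) ^ ((1 : ℝ) / 2) *
          (exp (5 * (K - 1)) * (x / h) * log x ^ (K - 1) * K ^ #h.primeFactors) := by
        gcongr
        exact sum_pow_card_primeFactors_gcd_eq_le hK.le hx k hh0
    _ = exp (5 * (K - 1)) * x * log x ^ (K - 1) *
          ((h : ℝ) ^ (-(1 : ℝ) / 2) * K ^ #h.primeFactors) := by
        rw [show -(1 : ℝ) / 2 = 1 / 2 - 1 by norm_num, rpow_sub hh0', rpow_one]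
        ring
end
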